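/- In the formal expansion of an asymptotically conical gradient expanding soliton, the first correction term is determined by h via h₀ = −2[Ric(h) − (n−1)h], i.e. H_{jk} = r² h_{jk} − 2[R_{jk} − (n−1)h_{jk}] + O(r^{−2}), where R_{jk} is the Ricci tensor of h and n = dim Y. -/

import Mathlib

noncomputable section

open Filter Asymptotics

/-- Points of coordinate space. -/
abbrev Pt (n : ℕ) : Type := EuclideanSpace ℝ (Fin n)

/-- The `i`-th coordinate partial derivative of a function. -/
def pd {n : ℕ} (i : Fin n) (F : Pt n → ℝ) (x : Pt n) : ℝ :=
  fderiv ℝ F x (EuclideanSpace.single i 1)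

/-- Christoffel symbols `Γ^k_{ij}` of a metric `g`, given in coordinates as a
matrix-valued function; indices are raised using the matrix inverse of `g`. -/
def christoffel {n : ℕ} (g : Pt n → Matrix (Fin n) (Fin n) ℝ) (k i j : Fin n) (x : Pt n) : ℝ :=
  (1 / 2) * ∑ l, (g x)⁻¹ k l *
    (pd i (fun y => g y j l) x + pd j (fun y => g y i l) x - pd l (fun y => g y i j) x)

/-- Ricci curvature `R_{ij}` of `g` in coordinates. -/
def ricci {n : ℕ} (g : Pt n → Matrix (Fin n) (Fin n) ℝ) (i j : Fin n) (x : Pt n) : ℝ :=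
  (∑ k, pd k (christoffel g k i j) x) - (∑ k, pd i (christoffel g k k j) x)
    + (∑ k, ∑ l, christoffel g k k l x * christoffel g l i j x)
    - (∑ k, ∑ l, christoffel g k i l x * christoffel g l k j x)

/-- Scalar curvature `R = g^{ij} R_{ij}`. -/
def scalarCurv {n : ℕ} (g : Pt n → Matrix (Fin n) (Fin n) ℝ) (x : Pt n) : ℝ :=
  ∑ i, ∑ j, (g x)⁻¹ i j * ricci g i j x

/-- Hessian `(∇∇ f)_{ij} = ∂_i ∂_j f - Γ^k_{ij} ∂_k f`. -/
def hessian {n : ℕ} (g : Pt n → Matrix (Fin n) (Fin n) ℝ) (f : Pt n → ℝ) (i j : Fin n)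
    (x : Pt n) : ℝ :=
  pd i (pd j f) x - ∑ k, christoffel g k i j x * pd k f x

/-- Laplacian `Δ f = g^{ij} (∇∇ f)_{ij}`. -/
def laplacian {n : ℕ} (g : Pt n → Matrix (Fin n) (Fin n) ℝ) (f : Pt n → ℝ) (x : Pt n) : ℝ :=
  ∑ i, ∑ j, (g x)⁻¹ i j * hessian g f i j x

/-- `|∇ f|² = g^{ij} ∂_i f ∂_j f`. -/
def gradSq {n : ℕ} (g : Pt n → Matrix (Fin n) (Fin n) ℝ) (f : Pt n → ℝ) (x : Pt n) : ℝ :=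
  ∑ i, ∑ j, (g x)⁻¹ i j * pd i f x * pd j f x

/-- Covariant derivative `∇_a T_{bc}` of a 2-tensor `T` with respect to the
Levi-Civita connection of `g`. -/
def covDeriv2 {n : ℕ} (g : Pt n → Matrix (Fin n) (Fin n) ℝ) (T : Fin n → Fin n → Pt n → ℝ)
    (a b c : Fin n) (x : Pt n) : ℝ :=
  pd a (T b c) x - (∑ d, christoffel g d a b x * T d c x)
    - ∑ d, christoffel g d a c x * T b d x

/-- `g` is a smooth Riemannian metric in coordinates. -/
structure IsMetric {n : ℕ} (g : Pt n → Matrix (Fin n) (Fin n) ℝ) : Prop where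
  smooth : ∀ i j, ContDiff ℝ (⊤ : ℕ∞) fun x => g x i j
  symm : ∀ x, (g x).IsSymm
  posdef : ∀ x, (g x).PosDef

/-- Tangential partial derivative `∂/∂x^i` on `(0,∞) × Y` (coordinate `0` is `r`). -/
def pdT {n : ℕ} (i : Fin n) (F : Pt (n + 1) → ℝ) (x : Pt (n + 1)) : ℝ := pd i.succ F x

/-- Radial partial derivative `∂/∂r`. -/
def pdr {n : ℕ} (F : Pt (n + 1) → ℝ) (x : Pt (n + 1)) : ℝ := pd 0 F x

/-- The metric `g = dr² + H(r)` in block form, coordinate `0` being `r`. -/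
def warp {n : ℕ} (H : Pt (n + 1) → Matrix (Fin n) (Fin n) ℝ) (x : Pt (n + 1)) :
    Matrix (Fin (n + 1)) (Fin (n + 1)) ℝ :=
  Matrix.of fun a b =>
    Fin.cases (Fin.cases (1 : ℝ) (fun _ => 0) b) (fun i => Fin.cases 0 (fun j => H x i j) b) a

/-- Christoffel symbols of the slice metric `H(r)` on `Y`. -/
def christoffelT {n : ℕ} (H : Pt (n + 1) → Matrix (Fin n) (Fin n) ℝ) (k i j : Fin n)
    (x : Pt (n + 1)) : ℝ :=
  (1 / 2) * ∑ l, (H x)⁻¹ k l *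
    (pdT i (fun y => H y j l) x + pdT j (fun y => H y i l) x - pdT l (fun y => H y i j) x)

/-- Ricci curvature `R^H_{ij}` of the slice metric `H(r)`. -/
def ricciT {n : ℕ} (H : Pt (n + 1) → Matrix (Fin n) (Fin n) ℝ) (i j : Fin n)
    (x : Pt (n + 1)) : ℝ :=
  (∑ k, pdT k (christoffelT H k i j) x) - (∑ k, pdT i (christoffelT H k k j) x)
    + (∑ k, ∑ l, christoffelT H k k l x * christoffelT H l i j x)
    - (∑ k, ∑ l, christoffelT H k i l x * christoffelT H l k j x)

/-- Hessian with respect to the slice metric `H(r)`. -/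
def hessT {n : ℕ} (H : Pt (n + 1) → Matrix (Fin n) (Fin n) ℝ) (f : Pt (n + 1) → ℝ)
    (i j : Fin n) (x : Pt (n + 1)) : ℝ :=
  pdT i (pdT j f) x - ∑ k, christoffelT H k i j x * pdT k f x

/-- Covariant derivative `∇_a T_{bc}` with respect to the slice metric `H(r)`. -/
def covT {n : ℕ} (H : Pt (n + 1) → Matrix (Fin n) (Fin n) ℝ) (T : Fin n → Fin n → Pt (n + 1) → ℝ)
    (a b c : Fin n) (x : Pt (n + 1)) : ℝ :=
  pdT a (T b c) x - (∑ d, christoffelT H d a b x * T d c x)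
    - ∑ d, christoffelT H d a c x * T b d x

/-- The tangential coordinates of a point of `(0,∞) × Y`. -/
def tailPt {n : ℕ} (x : Pt (n + 1)) : Pt n := WithLp.toLp 2 (fun i : Fin n => x i.succ)

/-- The point of `(0,∞) × Y` with radial coordinate `r` and tangential coordinates `y`. -/
def consPt {n : ℕ} (r : ℝ) (y : Pt n) : Pt (n + 1) :=
  WithLp.toLp 2 (fun i : Fin (n + 1) => Fin.cases r (fun j => y j) i)

/-- Truncation of the formal series `H = r²h + h₀ + r⁻²h₂ + ⋯` after the term `r^{-2m} h_{2m}`. -/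
def Htrunc {n : ℕ} (h : Pt n → Matrix (Fin n) (Fin n) ℝ)
    (h2 : ℕ → Pt n → Matrix (Fin n) (Fin n) ℝ) (m : ℕ) (x : Pt (n + 1)) :
    Matrix (Fin n) (Fin n) ℝ :=
  Matrix.of fun j k =>
    (x 0) ^ 2 * h (tailPt x) j k
      + ∑ i ∈ Finset.range (m + 1), ((x 0) ^ (2 * i))⁻¹ * h2 i (tailPt x) j k

/-- Truncation of the formal series `f = -r²/4 + f₀ + r⁻²f₂ + ⋯` after `r^{-2m} f_{2m}`. -/
def ftrunc {n : ℕ} (f2 : ℕ → Pt n → ℝ) (m : ℕ) (x : Pt (n + 1)) : ℝ :=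
  -(x 0) ^ 2 / 4 + ∑ i ∈ Finset.range (m + 1), ((x 0) ^ (2 * i))⁻¹ * f2 i (tailPt x)

/-- The gradient expanding soliton tensor `Ric_g + Hess_g f + ½ g` for the truncated
series, where `g = dr² + H(r)`. -/
def solitonE {n : ℕ} (h : Pt n → Matrix (Fin n) (Fin n) ℝ)
    (h2 : ℕ → Pt n → Matrix (Fin n) (Fin n) ℝ) (f2 : ℕ → Pt n → ℝ) (m : ℕ)
    (a b : Fin (n + 1)) (x : Pt (n + 1)) : ℝ :=
  ricci (warp (Htrunc h h2 m)) a b x + hessian (warp (Htrunc h h2 m)) (ftrunc f2 m) a b x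
    + (1 / 2) * warp (Htrunc h h2 m) x a b

/-- The formal series `g = dr² + r²h + Σ r^{-2i} h_{2i}`, `f = -r²/4 + Σ r^{-2i} f_{2i}`
satisfy the gradient expanding soliton equation `Ric + Hess f + ½ g = 0` to all orders in
`r⁻¹`: every component of the soliton tensor of the truncations decays to arbitrarily
high order as `r → ∞` once enough terms are kept. -/
def SolvesFormally {n : ℕ} (h : Pt n → Matrix (Fin n) (Fin n) ℝ)
    (h2 : ℕ → Pt n → Matrix (Fin n) (Fin n) ℝ) (f2 : ℕ → Pt n → ℝ) : Prop :=
  ∀ (k : ℕ) (a b : Fin (n + 1)) (y : Pt n), ∃ m₀ : ℕ, ∀ m ≥ m₀,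
    (fun r : ℝ => solitonE h h2 f2 m a b (consPt r y)) =O[atTop] fun r : ℝ => r ^ (-(k : ℤ))

/-! ### Chunk 1: basic `pd` calculus -/

section Basic

variable {n : ℕ}

/-- The coordinate projection as a continuous linear map. -/
def coordCLM (i : Fin n) : Pt n →L[ℝ] ℝ := EuclideanSpace.proj i

@[simp] lemma coordCLM_apply (i : Fin n) (x : Pt n) : coordCLM i x = x i := rfl

/-- `tailPt` as a continuous linear map. -/
def tailCLM : Pt (n + 1) →L[ℝ] Pt n :=
  LinearMap.toContinuousLinearMap
    { toFun := tailPt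
      map_add' := fun x y => rfl
      map_smul' := fun c x => by ext i; simp [tailPt] }

@[simp] lemma tailCLM_apply (x : Pt (n + 1)) : tailCLM x = tailPt x := rfl

/-- The linear part of `consPt`. -/
def consCLM : Pt n →L[ℝ] Pt (n + 1) :=
  LinearMap.toContinuousLinearMap
    { toFun := fun z => consPt 0 z
      map_add' := fun x y => by
        ext i
        induction i using Fin.cases <;> simp [consPt]
      map_smul' := fun c x => by
        ext i
        induction i using Fin.cases <;> simp [consPt] }

lemma consCLM_apply (z : Pt n) : consCLM z = consPt 0 z := rfl

lemma consPt_eq (r : ℝ) (z : Pt n) : consPt r z = consPt r 0 + consCLM z := by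
  ext i
  induction i using Fin.cases <;>
    simp [consPt, consCLM, PiLp.add_apply]

lemma consPt_zero_apply (r : ℝ) (y : Pt n) : consPt r y 0 = r := rfl

lemma consPt_succ_apply (r : ℝ) (y : Pt n) (i : Fin n) : consPt r y i.succ = y i := rfl

lemma tailPt_consPt (r : ℝ) (y : Pt n) : tailPt (consPt r y) = y := rfl

lemma hasFDerivAt_consPt (r : ℝ) (z : Pt n) :
    HasFDerivAt (fun z' : Pt n => consPt r z') (consCLM : Pt n →L[ℝ] Pt (n+1)) z := by
  have : (fun z' : Pt n => consPt r z') = fun z' => consPt r 0 + consCLM z' := by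
    funext z'; exact consPt_eq r z'
  rw [this]
  exact (consCLM.hasFDerivAt).const_add _

lemma consCLM_single (i : Fin n) :
    (consCLM (EuclideanSpace.single i 1) : Pt (n+1)) = EuclideanSpace.single i.succ 1 := by
  ext a
  induction a using Fin.cases with
  | zero => simp [consCLM, consPt, EuclideanSpace.single_apply, (Fin.succ_ne_zero i).symm]
  | succ j =>
      simp [consCLM, consPt, EuclideanSpace.single_apply, Fin.succ_inj]

/-- chain rule: tangential derivative through `consPt`. -/
lemma pd_succ_consPt {F : Pt (n + 1) → ℝ} {r : ℝ} {z : Pt n}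
    (hF : DifferentiableAt ℝ F (consPt r z)) (i : Fin n) :
    pd i.succ F (consPt r z) = pd i (fun z' => F (consPt r z')) z := by
  unfold pd
  have hc := hasFDerivAt_consPt (n := n) r z
  have h2 := ((hF.hasFDerivAt.comp z hc).fderiv)
  have h3 : fderiv ℝ (fun z' => F (consPt r z')) z = (fderiv ℝ F (consPt r z)).comp consCLM := h2
  rw [h3, ContinuousLinearMap.comp_apply, consCLM_single]

lemma pdT_consPt {F : Pt (n + 1) → ℝ} {r : ℝ} {z : Pt n}
    (hF : DifferentiableAt ℝ F (consPt r z)) (i : Fin n) :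
    pdT i F (consPt r z) = pd i (fun z' => F (consPt r z')) z :=
  pd_succ_consPt hF i

end Basic
/-! ### Chunk 2: pd algebra, product derivatives, smoothness -/

section PdAlgebra

variable {n : ℕ}

lemma pd_congr_nhds {F G : Pt n → ℝ} {x : Pt n} (h : F =ᶠ[nhds x] G) (i : Fin n) :
    pd i F x = pd i G x := by
  unfold pd; rw [h.fderiv_eq]

lemma pd_const (c : ℝ) (i : Fin n) (x : Pt n) : pd i (fun _ => c) x = 0 := by
  unfold pd; rw [fderiv_fun_const]; rfl

lemma pd_add {F G : Pt n → ℝ} {x : Pt n} (hF : DifferentiableAt ℝ F x)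
    (hG : DifferentiableAt ℝ G x) (i : Fin n) :
    pd i (fun y => F y + G y) x = pd i F x + pd i G x := by
  unfold pd; rw [fderiv_fun_add hF hG]; rfl

lemma pd_sub {F G : Pt n → ℝ} {x : Pt n} (hF : DifferentiableAt ℝ F x)
    (hG : DifferentiableAt ℝ G x) (i : Fin n) :
    pd i (fun y => F y - G y) x = pd i F x - pd i G x := by
  unfold pd; rw [fderiv_fun_sub hF hG]; rfl

lemma pd_mul {F G : Pt n → ℝ} {x : Pt n} (hF : DifferentiableAt ℝ F x)
    (hG : DifferentiableAt ℝ G x) (i : Fin n) :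
    pd i (fun y => F y * G y) x = F x * pd i G x + G x * pd i F x := by
  unfold pd; rw [fderiv_fun_mul hF hG]; simp [smul_eq_mul]

lemma pd_const_mul {F : Pt n → ℝ} {x : Pt n} (hF : DifferentiableAt ℝ F x) (c : ℝ) (i : Fin n) :
    pd i (fun y => c * F y) x = c * pd i F x := by
  unfold pd; rw [fderiv_const_mul hF]; simp [smul_eq_mul]

lemma pd_sum {ι : Type*} {s : Finset ι} {F : ι → Pt n → ℝ} {x : Pt n}
    (hF : ∀ j ∈ s, DifferentiableAt ℝ (F j) x) (i : Fin n) :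
    pd i (fun y => ∑ j ∈ s, F j y) x = ∑ j ∈ s, pd i (F j) x := by
  unfold pd
  rw [fderiv_fun_sum hF]
  simp

/-- Smoothness of `pd`. -/
lemma ContDiffAt.pd' {F : Pt n → ℝ} {x : Pt n} (hF : ContDiffAt ℝ (⊤ : ℕ∞) F x) (i : Fin n) :
    ContDiffAt ℝ (⊤ : ℕ∞) (pd i F) x := by
  have h1 : ContDiffAt ℝ (⊤ : ℕ∞) (fderiv ℝ F) x := hF.fderiv_right (by simp)
  have h2 := ((ContinuousLinearMap.apply ℝ ℝ
    (EuclideanSpace.single i (1 : ℝ))).contDiff.contDiffAt).comp x h1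
  exact h2

end PdAlgebra

section SingleLemmas

variable {n : ℕ}

lemma single_succ_zero (i : Fin n) : (EuclideanSpace.single i.succ (1 : ℝ)) 0 = 0 := by
  rw [EuclideanSpace.single_apply]
  simp [(Fin.succ_ne_zero i).symm]

lemma single_zero_zero : (EuclideanSpace.single (0 : Fin (n + 1)) (1 : ℝ)) 0 = 1 := by
  rw [EuclideanSpace.single_apply]; simp

lemma tailPt_single_zero : tailPt (EuclideanSpace.single (0 : Fin (n + 1)) (1 : ℝ)) = 0 := by
  ext j
  show (EuclideanSpace.single (0 : Fin (n+1)) (1:ℝ)) j.succ = 0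
  rw [EuclideanSpace.single_apply]
  simp [Fin.succ_ne_zero]

lemma tailPt_single_succ (i : Fin n) :
    tailPt (EuclideanSpace.single i.succ (1 : ℝ)) = EuclideanSpace.single i (1 : ℝ) := by
  ext j
  show (EuclideanSpace.single i.succ (1:ℝ)) j.succ = _
  rw [EuclideanSpace.single_apply, EuclideanSpace.single_apply]
  simp [Fin.succ_inj]

end SingleLemmas

section ProdFun

variable {n : ℕ}

/-- Derivative structure of `x ↦ φ(x 0) ψ(tail x)`. -/
lemma hasFDerivAt_radmul {φ : ℝ → ℝ} {φ' : ℝ} {ψ : Pt n → ℝ} {x : Pt (n + 1)}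
    (hφ : HasDerivAt φ φ' (x 0)) (hψ : DifferentiableAt ℝ ψ (tailPt x)) :
    HasFDerivAt (fun y : Pt (n + 1) => φ (y 0) * ψ (tailPt y))
      (φ (x 0) • ((fderiv ℝ ψ (tailPt x)).comp (tailCLM : Pt (n+1) →L[ℝ] Pt n))
        + ψ (tailPt x) • (φ' • (coordCLM 0 : Pt (n+1) →L[ℝ] ℝ))) x := by
  have h1 : HasFDerivAt (fun y : Pt (n + 1) => φ (y 0))
      (φ' • (coordCLM 0 : Pt (n+1) →L[ℝ] ℝ)) x :=
    hφ.comp_hasFDerivAt x ((coordCLM 0 : Pt (n+1) →L[ℝ] ℝ)).hasFDerivAt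
  have h2 : HasFDerivAt (fun y : Pt (n + 1) => ψ (tailPt y))
      ((fderiv ℝ ψ (tailPt x)).comp (tailCLM : Pt (n+1) →L[ℝ] Pt n)) x :=
    hψ.hasFDerivAt.comp x (tailCLM : Pt (n+1) →L[ℝ] Pt n).hasFDerivAt
  exact h1.mul h2

lemma pd_zero_radmul {φ : ℝ → ℝ} {φ' : ℝ} {ψ : Pt n → ℝ} {x : Pt (n + 1)}
    (hφ : HasDerivAt φ φ' (x 0)) (hψ : DifferentiableAt ℝ ψ (tailPt x)) :
    pd 0 (fun y : Pt (n + 1) => φ (y 0) * ψ (tailPt y)) x = φ' * ψ (tailPt x) := by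
  unfold pd
  rw [(hasFDerivAt_radmul hφ hψ).fderiv]
  simp [tailPt_single_zero, single_zero_zero, mul_comm]

lemma pd_succ_radmul {φ : ℝ → ℝ} {φ' : ℝ} {ψ : Pt n → ℝ} {x : Pt (n + 1)}
    (hφ : HasDerivAt φ φ' (x 0)) (hψ : DifferentiableAt ℝ ψ (tailPt x)) (i : Fin n) :
    pd i.succ (fun y : Pt (n + 1) => φ (y 0) * ψ (tailPt y)) x
      = φ (x 0) * pd i ψ (tailPt x) := by
  unfold pd
  rw [(hasFDerivAt_radmul hφ hψ).fderiv]
  simp only [ContinuousLinearMap.add_apply, ContinuousLinearMap.smul_apply,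
    ContinuousLinearMap.comp_apply, tailCLM_apply, tailPt_single_succ, coordCLM_apply,
    single_succ_zero, smul_eq_mul, mul_zero, add_zero]

lemma differentiableAt_radmul {φ : ℝ → ℝ} {φ' : ℝ} {ψ : Pt n → ℝ} {x : Pt (n + 1)}
    (hφ : HasDerivAt φ φ' (x 0)) (hψ : DifferentiableAt ℝ ψ (tailPt x)) :
    DifferentiableAt ℝ (fun y : Pt (n + 1) => φ (y 0) * ψ (tailPt y)) x :=
  (hasFDerivAt_radmul hφ hψ).differentiableAt

lemma contDiffAt_radmul {φ : ℝ → ℝ} {ψ : Pt n → ℝ} {x : Pt (n + 1)}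
    (hφ : ContDiffAt ℝ (⊤ : ℕ∞) φ (x 0)) (hψ : ContDiffAt ℝ (⊤ : ℕ∞) ψ (tailPt x)) :
    ContDiffAt ℝ (⊤ : ℕ∞) (fun y : Pt (n + 1) => φ (y 0) * ψ (tailPt y)) x := by
  have h1 : ContDiffAt ℝ (⊤ : ℕ∞) (fun y : Pt (n+1) => φ (y 0)) x :=
    hφ.comp x ((coordCLM 0 : Pt (n+1) →L[ℝ] ℝ)).contDiff.contDiffAt
  have h2 : ContDiffAt ℝ (⊤ : ℕ∞) (fun y : Pt (n+1) => ψ (tailPt y)) x :=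
    hψ.comp x (tailCLM : Pt (n+1) →L[ℝ] Pt n).contDiff.contDiffAt
  exact h1.mul h2

end ProdFun

section MatrixSmooth

variable {E : Type*} [NormedAddCommGroup E] [NormedSpace ℝ E] {N : ℕ}

lemma contDiffAt_det {M : E → Matrix (Fin N) (Fin N) ℝ} {x : E}
    (hM : ∀ i j, ContDiffAt ℝ (⊤ : ℕ∞) (fun y => M y i j) x) :
    ContDiffAt ℝ (⊤ : ℕ∞) (fun y => (M y).det) x := by
  have : (fun y => (M y).det)
      = fun y => ∑ σ : Equiv.Perm (Fin N), (Equiv.Perm.sign σ : ℤ) * ∏ i, M y (σ i) i := by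
    funext y; rw [Matrix.det_apply']
  rw [this]
  exact ContDiffAt.sum fun σ _ =>
    (contDiffAt_const.mul (contDiffAt_prod fun i _ => hM (σ i) i))

lemma contDiffAt_adjugate {M : E → Matrix (Fin N) (Fin N) ℝ} {x : E}
    (hM : ∀ i j, ContDiffAt ℝ (⊤ : ℕ∞) (fun y => M y i j) x) (i j : Fin N) :
    ContDiffAt ℝ (⊤ : ℕ∞) (fun y => (M y).adjugate i j) x := by
  have : (fun y => (M y).adjugate i j)
      = fun y => ((M y).updateRow j (Pi.single i 1)).det := by
    funext y; rw [Matrix.adjugate_apply]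
  rw [this]
  refine contDiffAt_det fun a b => ?_
  by_cases hab : a = j
  · subst hab
    simp only [Matrix.updateRow_apply, if_pos rfl]
    exact contDiffAt_const
  · simp only [Matrix.updateRow_apply, if_neg hab]
    exact hM a b

lemma matinv_entry_eq (A : Matrix (Fin N) (Fin N) ℝ) (i j : Fin N) :
    A⁻¹ i j = (A.det)⁻¹ * A.adjugate i j := by
  rw [Matrix.inv_def, Matrix.smul_apply, Ring.inverse_eq_inv, smul_eq_mul]

lemma contDiffAt_matinv {M : E → Matrix (Fin N) (Fin N) ℝ} {x : E}
    (hM : ∀ i j, ContDiffAt ℝ (⊤ : ℕ∞) (fun y => M y i j) x) (hdet : (M x).det ≠ 0) (i j : Fin N) :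
    ContDiffAt ℝ (⊤ : ℕ∞) (fun y => (M y)⁻¹ i j) x := by
  have : (fun y => (M y)⁻¹ i j) = fun y => ((M y).det)⁻¹ * (M y).adjugate i j := by
    funext y; exact matinv_entry_eq _ i j
  rw [this]
  exact ((contDiffAt_det hM).inv hdet).mul (contDiffAt_adjugate hM i j)

lemma matrix_smul_inv (c : ℝ) (hc : c ≠ 0) (A : Matrix (Fin N) (Fin N) ℝ) :
    (c • A)⁻¹ = c⁻¹ • A⁻¹ := by
  rcases Nat.eq_zero_or_pos N with h0 | hpos
  · subst h0; ext i j; exact i.elim0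
  · rw [Matrix.inv_def, Matrix.inv_def, Matrix.det_smul, Matrix.adjugate_smul]
    rw [Ring.inverse_eq_inv, Ring.inverse_eq_inv]
    rw [smul_smul, smul_smul]
    congr 1
    rw [Fintype.card_fin]
    have hN : N - 1 + 1 = N := Nat.succ_pred_eq_of_pos hpos
    have hNe : c ^ N = c ^ (N - 1) * c := by rw [← pow_succ, hN]
    have hpow : (c ^ (N - 1))⁻¹ * c ^ (N - 1) = 1 := inv_mul_cancel₀ (pow_ne_zero _ hc)
    calc (c ^ N * A.det)⁻¹ * c ^ (N - 1)
        = (c ^ (N-1))⁻¹ * c ^ (N-1) * (c⁻¹ * A.det⁻¹) := by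
          rw [hNe, mul_inv, mul_inv]; ring
      _ = c⁻¹ * A.det⁻¹ := by rw [hpow, one_mul]
end MatrixSmooth
/-! ### Chunk 3: the rescaled family `Kmat` and radial derivatives -/

section Family

variable {n : ℕ}

/-- The family `K t = h + Σ tⁱ⁺¹ h2ᵢ`; `Htrunc (consPt r z) = r² • K (r⁻²) z`. -/
def Kmat (h : Pt n → Matrix (Fin n) (Fin n) ℝ) (h2 : ℕ → Pt n → Matrix (Fin n) (Fin n) ℝ)
    (m : ℕ) (t : ℝ) (z : Pt n) : Matrix (Fin n) (Fin n) ℝ :=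
  Matrix.of fun j k => h z j k + ∑ i ∈ Finset.range (m + 1), t ^ (i + 1) * h2 i z j k

lemma Kmat_apply (h : Pt n → Matrix (Fin n) (Fin n) ℝ) (h2 : ℕ → Pt n → Matrix (Fin n) (Fin n) ℝ)
    (m : ℕ) (t : ℝ) (z : Pt n) (j k : Fin n) :
    Kmat h h2 m t z j k = h z j k + ∑ i ∈ Finset.range (m + 1), t ^ (i + 1) * h2 i z j k := rfl

lemma Kmat_zero (h : Pt n → Matrix (Fin n) (Fin n) ℝ) (h2 : ℕ → Pt n → Matrix (Fin n) (Fin n) ℝ)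
    (m : ℕ) (z : Pt n) : Kmat h h2 m 0 z = h z := by
  ext j k
  rw [Kmat_apply]
  simp

/-- power bookkeeping -/
lemma tpow_base {r : ℝ} (hr : r ≠ 0) (i : ℕ) : ((r ^ 2)⁻¹) ^ (i + 1) = (r ^ (2 * i + 2))⁻¹ := by
  rw [← inv_pow, ← pow_mul]
  congr 1
  ring

lemma tpow_sq {r : ℝ} (hr : r ≠ 0) (i : ℕ) : r ^ 2 * ((r ^ 2)⁻¹) ^ (i + 1) = (r ^ (2 * i))⁻¹ := by
  rw [tpow_base hr i]
  rw [eq_comm, inv_eq_iff_eq_inv, mul_inv, inv_inv]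
  field_simp
  ring

lemma tpow_one {r : ℝ} (hr : r ≠ 0) (i : ℕ) : r * ((r ^ 2)⁻¹) ^ (i + 1) = (r ^ (2 * i + 1))⁻¹ := by
  rw [tpow_base hr i]
  rw [eq_comm, inv_eq_iff_eq_inv, mul_inv, inv_inv]
  field_simp
  ring

lemma Htrunc_consPt (h : Pt n → Matrix (Fin n) (Fin n) ℝ)
    (h2 : ℕ → Pt n → Matrix (Fin n) (Fin n) ℝ) (m : ℕ) {r : ℝ} (hr : r ≠ 0) (z : Pt n) :
    Htrunc h h2 m (consPt r z) = (r ^ 2) • Kmat h h2 m ((r ^ 2)⁻¹) z := by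
  ext j k
  rw [Matrix.smul_apply, Kmat_apply, smul_eq_mul]
  show (consPt r z 0) ^ 2 * h (tailPt (consPt r z)) j k
      + ∑ i ∈ Finset.range (m + 1),
        ((consPt r z 0) ^ (2 * i))⁻¹ * h2 i (tailPt (consPt r z)) j k = _
  rw [consPt_zero_apply, tailPt_consPt, mul_add, Finset.mul_sum]
  congr 1
  refine Finset.sum_congr rfl fun i _ => ?_
  rw [← mul_assoc, tpow_sq hr i]

/-- derivative of `s ↦ (s^k)⁻¹`. -/
lemma hasDerivAt_invpow (k : ℕ) {r : ℝ} (hr : r ≠ 0) :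
    HasDerivAt (fun s : ℝ => (s ^ k)⁻¹) (-(k : ℝ) * (r ^ (k + 1))⁻¹) r := by
  have hev : (fun s : ℝ => (s ^ k)⁻¹) =ᶠ[nhds r] fun s : ℝ => s ^ (-(k : ℤ)) := by
    filter_upwards [eventually_ne_nhds hr] with s hs
    rw [zpow_neg, zpow_natCast]
  have h := hasDerivAt_zpow (-(k : ℤ)) r (Or.inl hr)
  have h2 := h.congr_of_eventuallyEq hev
  refine h2.congr_deriv ?_
  have h3 : (-(k : ℤ) - 1) = -((k : ℤ) + 1) := by ring
  rw [h3, zpow_neg]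
  have h4 : r ^ ((k : ℤ) + 1) = r ^ (k + 1) := by
    rw [← zpow_natCast r (k + 1)]; push_cast; ring_nf
  rw [h4]
  push_cast
  ring

lemma hasDerivAt_sq (r : ℝ) : HasDerivAt (fun s : ℝ => s ^ 2) (2 * r) r := by
  simpa using hasDerivAt_pow 2 r

end Family
/-! ### Chunk 4: derivatives of Htrunc and ftrunc entries -/

section RadialOnly

variable {n : ℕ}

lemma hasFDerivAt_radial {φ : ℝ → ℝ} {φ' : ℝ} {x : Pt (n + 1)} (hφ : HasDerivAt φ φ' (x 0)) :
    HasFDerivAt (fun y : Pt (n + 1) => φ (y 0)) (φ' • (coordCLM 0 : Pt (n+1) →L[ℝ] ℝ)) x :=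
  hφ.comp_hasFDerivAt x ((coordCLM 0 : Pt (n+1) →L[ℝ] ℝ)).hasFDerivAt

lemma pd_zero_radial {φ : ℝ → ℝ} {φ' : ℝ} {x : Pt (n + 1)} (hφ : HasDerivAt φ φ' (x 0)) :
    pd 0 (fun y : Pt (n + 1) => φ (y 0)) x = φ' := by
  unfold pd
  rw [(hasFDerivAt_radial hφ).fderiv]
  simp [single_zero_zero]

lemma pd_succ_radial {φ : ℝ → ℝ} {φ' : ℝ} {x : Pt (n + 1)} (hφ : HasDerivAt φ φ' (x 0))
    (i : Fin n) : pd i.succ (fun y : Pt (n + 1) => φ (y 0)) x = 0 := by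
  unfold pd
  rw [(hasFDerivAt_radial hφ).fderiv]
  simp only [ContinuousLinearMap.smul_apply, coordCLM_apply, single_succ_zero, smul_eq_mul,
    mul_zero]

lemma contDiffAt_radial {φ : ℝ → ℝ} {x : Pt (n + 1)} (hφ : ContDiffAt ℝ (⊤ : ℕ∞) φ (x 0)) :
    ContDiffAt ℝ (⊤ : ℕ∞) (fun y : Pt (n + 1) => φ (y 0)) x :=
  hφ.comp x ((coordCLM 0 : Pt (n+1) →L[ℝ] ℝ)).contDiff.contDiffAt

end RadialOnly

section EntryCalc

variable {n : ℕ} {h : Pt n → Matrix (Fin n) (Fin n) ℝ}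
  {h2 : ℕ → Pt n → Matrix (Fin n) (Fin n) ℝ} {f2 : ℕ → Pt n → ℝ} {m : ℕ}

/-- first radial derivative of an `Htrunc` entry, as an explicit function. -/
def H1fun (h : Pt n → Matrix (Fin n) (Fin n) ℝ) (h2 : ℕ → Pt n → Matrix (Fin n) (Fin n) ℝ)
    (m : ℕ) (j k : Fin n) (x : Pt (n + 1)) : ℝ :=
  2 * x 0 * h (tailPt x) j k
    + ∑ i ∈ Finset.range (m + 1),
        -(2 * (i : ℝ)) * ((x 0) ^ (2 * i + 1))⁻¹ * h2 i (tailPt x) j k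

lemma Htrunc_entry_eq (j k : Fin n) :
    (fun x : Pt (n+1) => Htrunc h h2 m x j k)
      = fun x => (fun s : ℝ => s ^ 2) (x 0) * (fun z => h z j k) (tailPt x)
          + ∑ i ∈ Finset.range (m + 1),
              (fun s : ℝ => (s ^ (2 * i))⁻¹) (x 0) * (fun z => h2 i z j k) (tailPt x) := rfl

lemma contDiffAt_Htrunc (hs : ∀ j k, ContDiff ℝ (⊤ : ℕ∞) fun z => h z j k)
    (hs2 : ∀ i j k, ContDiff ℝ (⊤ : ℕ∞) fun z => h2 i z j k) {x : Pt (n + 1)} (hx : x 0 ≠ 0)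
    (j k : Fin n) : ContDiffAt ℝ (⊤ : ℕ∞) (fun x' => Htrunc h h2 m x' j k) x := by
  rw [Htrunc_entry_eq]
  refine ContDiffAt.add ?_ ?_
  · exact contDiffAt_radmul (contDiffAt_id.pow 2) (hs j k).contDiffAt
  · refine ContDiffAt.sum fun i _ => ?_
    exact contDiffAt_radmul ((contDiffAt_id.pow (2 * i)).inv (pow_ne_zero _ hx))
      (hs2 i j k).contDiffAt

lemma differentiableAt_Htrunc (hs : ∀ j k, ContDiff ℝ (⊤ : ℕ∞) fun z => h z j k)
    (hs2 : ∀ i j k, ContDiff ℝ (⊤ : ℕ∞) fun z => h2 i z j k) {x : Pt (n + 1)} (hx : x 0 ≠ 0)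
    (j k : Fin n) : DifferentiableAt ℝ (fun x' => Htrunc h h2 m x' j k) x :=
  (contDiffAt_Htrunc hs hs2 hx j k).differentiableAt (by simp)

lemma pd0_Htrunc (hs : ∀ j k, ContDiff ℝ (⊤ : ℕ∞) fun z => h z j k)
    (hs2 : ∀ i j k, ContDiff ℝ (⊤ : ℕ∞) fun z => h2 i z j k) {x : Pt (n + 1)} (hx : x 0 ≠ 0)
    (j k : Fin n) :
    pd 0 (fun x' => Htrunc h h2 m x' j k) x = H1fun h h2 m j k x := by
  rw [Htrunc_entry_eq]
  have hd1 : DifferentiableAt ℝ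
      (fun x' : Pt (n+1) => (fun s : ℝ => s ^ 2) (x' 0) * (fun z => h z j k) (tailPt x')) x :=
    differentiableAt_radmul (hasDerivAt_sq (x 0))
      ((hs j k).differentiable (by simp)).differentiableAt
  have hd2 : ∀ i ∈ Finset.range (m + 1), DifferentiableAt ℝ
      (fun x' : Pt (n+1) => (fun s : ℝ => (s ^ (2*i))⁻¹) (x' 0)
        * (fun z => h2 i z j k) (tailPt x')) x :=
    fun i _ => differentiableAt_radmul (hasDerivAt_invpow (2*i) hx)
      ((hs2 i j k).differentiable (by simp)).differentiableAt
  rw [pd_add hd1 (DifferentiableAt.fun_sum hd2) 0, pd_sum hd2 0]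
  rw [pd_zero_radmul (hasDerivAt_sq (x 0)) ((hs j k).differentiable (by simp)).differentiableAt]
  unfold H1fun
  congr 1
  refine Finset.sum_congr rfl fun i _ => ?_
  rw [pd_zero_radmul (hasDerivAt_invpow (2*i) hx)
    ((hs2 i j k).differentiable (by simp)).differentiableAt]
  push_cast
  ring

lemma H1fun_eq (j k : Fin n) :
    (fun x : Pt (n+1) => H1fun h h2 m j k x)
      = fun x => (fun s : ℝ => 2 * s) (x 0) * (fun z => h z j k) (tailPt x)
          + ∑ i ∈ Finset.range (m + 1),
              (fun s : ℝ => -(2 * (i:ℝ)) * (s ^ (2 * i + 1))⁻¹) (x 0)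
                * (fun z => h2 i z j k) (tailPt x) := rfl

lemma hasDerivAt_two_mul (r : ℝ) : HasDerivAt (fun s : ℝ => 2 * s) 2 r := by
  simpa using (hasDerivAt_id r).const_mul (2:ℝ)

lemma hasDerivAt_coefH1 (i : ℕ) {r : ℝ} (hr : r ≠ 0) :
    HasDerivAt (fun s : ℝ => -(2 * (i:ℝ)) * (s ^ (2 * i + 1))⁻¹)
      (-(2 * (i:ℝ)) * (-(2 * (i:ℝ) + 1) * (r ^ (2 * i + 2))⁻¹)) r := by
  have := (hasDerivAt_invpow (2*i+1) hr).const_mul (-(2 * (i:ℝ)))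
  refine this.congr_deriv ?_
  push_cast
  ring

lemma differentiableAt_H1fun (hs : ∀ j k, ContDiff ℝ (⊤ : ℕ∞) fun z => h z j k)
    (hs2 : ∀ i j k, ContDiff ℝ (⊤ : ℕ∞) fun z => h2 i z j k) {x : Pt (n + 1)} (hx : x 0 ≠ 0)
    (j k : Fin n) : DifferentiableAt ℝ (H1fun h h2 m j k) x := by
  rw [show (H1fun h h2 m j k) = fun x => H1fun h h2 m j k x from rfl, H1fun_eq]
  refine DifferentiableAt.add ?_ (DifferentiableAt.fun_sum fun i _ => ?_)
  · exact differentiableAt_radmul (hasDerivAt_two_mul (x 0))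
      ((hs j k).differentiable (by simp)).differentiableAt
  · exact differentiableAt_radmul (hasDerivAt_coefH1 i hx)
      ((hs2 i j k).differentiable (by simp)).differentiableAt

lemma pd0_H1fun (hs : ∀ j k, ContDiff ℝ (⊤ : ℕ∞) fun z => h z j k)
    (hs2 : ∀ i j k, ContDiff ℝ (⊤ : ℕ∞) fun z => h2 i z j k) {x : Pt (n + 1)} (hx : x 0 ≠ 0)
    (j k : Fin n) :
    pd 0 (H1fun h h2 m j k) x
      = 2 * h (tailPt x) j k
        + ∑ i ∈ Finset.range (m + 1),
            (2 * (i:ℝ)) * (2 * (i:ℝ) + 1) * ((x 0) ^ (2 * i + 2))⁻¹ * h2 i (tailPt x) j k := by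
  rw [show (H1fun h h2 m j k) = fun x => H1fun h h2 m j k x from rfl, H1fun_eq]
  have hd1 : DifferentiableAt ℝ
      (fun x' : Pt (n+1) => (fun s : ℝ => 2 * s) (x' 0) * (fun z => h z j k) (tailPt x')) x :=
    differentiableAt_radmul (hasDerivAt_two_mul (x 0))
      ((hs j k).differentiable (by simp)).differentiableAt
  have hd2 : ∀ i ∈ Finset.range (m + 1), DifferentiableAt ℝ
      (fun x' : Pt (n+1) => (fun s : ℝ => -(2 * (i:ℝ)) * (s ^ (2 * i + 1))⁻¹) (x' 0)
        * (fun z => h2 i z j k) (tailPt x')) x :=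
    fun i _ => differentiableAt_radmul (hasDerivAt_coefH1 i hx)
      ((hs2 i j k).differentiable (by simp)).differentiableAt
  rw [pd_add hd1 (DifferentiableAt.fun_sum hd2) 0, pd_sum hd2 0]
  rw [pd_zero_radmul (hasDerivAt_two_mul (x 0)) ((hs j k).differentiable (by simp)).differentiableAt]
  congr 1
  refine Finset.sum_congr rfl fun i _ => ?_
  rw [pd_zero_radmul (hasDerivAt_coefH1 i hx)
    ((hs2 i j k).differentiable (by simp)).differentiableAt]
  push_cast
  ring

lemma pdT_Htrunc (hs : ∀ j k, ContDiff ℝ (⊤ : ℕ∞) fun z => h z j k)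
    (hs2 : ∀ i j k, ContDiff ℝ (⊤ : ℕ∞) fun z => h2 i z j k) {x : Pt (n + 1)} (hx : x 0 ≠ 0)
    (c j k : Fin n) :
    pd c.succ (fun x' => Htrunc h h2 m x' j k) x
      = (x 0) ^ 2 * pd c (fun z => h z j k) (tailPt x)
        + ∑ i ∈ Finset.range (m + 1),
            ((x 0) ^ (2 * i))⁻¹ * pd c (fun z => h2 i z j k) (tailPt x) := by
  rw [Htrunc_entry_eq]
  have hd1 : DifferentiableAt ℝ
      (fun x' : Pt (n+1) => (fun s : ℝ => s ^ 2) (x' 0) * (fun z => h z j k) (tailPt x')) x :=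
    differentiableAt_radmul (hasDerivAt_sq (x 0))
      ((hs j k).differentiable (by simp)).differentiableAt
  have hd2 : ∀ i ∈ Finset.range (m + 1), DifferentiableAt ℝ
      (fun x' : Pt (n+1) => (fun s : ℝ => (s ^ (2*i))⁻¹) (x' 0)
        * (fun z => h2 i z j k) (tailPt x')) x :=
    fun i _ => differentiableAt_radmul (hasDerivAt_invpow (2*i) hx)
      ((hs2 i j k).differentiable (by simp)).differentiableAt
  rw [pd_add hd1 (DifferentiableAt.fun_sum hd2) c.succ, pd_sum hd2 c.succ]
  rw [pd_succ_radmul (hasDerivAt_sq (x 0)) ((hs j k).differentiable (by simp)).differentiableAt]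
  congr 1
  refine Finset.sum_congr rfl fun i _ => ?_
  rw [pd_succ_radmul (hasDerivAt_invpow (2*i) hx)
    ((hs2 i j k).differentiable (by simp)).differentiableAt]

/-! ftrunc -/

lemma ftrunc_eq :
    (fun x : Pt (n+1) => ftrunc f2 m x)
      = fun x => (fun s : ℝ => -s ^ 2 / 4) (x 0)
          + ∑ i ∈ Finset.range (m + 1),
              (fun s : ℝ => (s ^ (2 * i))⁻¹) (x 0) * (fun z => f2 i z) (tailPt x) := rfl

lemma hasDerivAt_negsq4 (r : ℝ) : HasDerivAt (fun s : ℝ => -s ^ 2 / 4) (-(2 * r) / 4) r := by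
  have := ((hasDerivAt_sq r).neg).div_const (4:ℝ)
  simp only [Pi.neg_apply] at this
  exact this

lemma contDiffAt_ftrunc (hfs : ∀ i, ContDiff ℝ (⊤ : ℕ∞) (f2 i)) {x : Pt (n + 1)} (hx : x 0 ≠ 0) :
    ContDiffAt ℝ (⊤ : ℕ∞) (fun x' => ftrunc f2 m x') x := by
  rw [ftrunc_eq]
  refine ContDiffAt.add ?_ (ContDiffAt.sum fun i _ => ?_)
  · exact contDiffAt_radial (((contDiffAt_id.pow 2).neg).div_const 4)
  · exact contDiffAt_radmul ((contDiffAt_id.pow (2 * i)).inv (pow_ne_zero _ hx))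
      (hfs i).contDiffAt

lemma differentiableAt_ftrunc (hfs : ∀ i, ContDiff ℝ (⊤ : ℕ∞) (f2 i)) {x : Pt (n + 1)} (hx : x 0 ≠ 0) :
    DifferentiableAt ℝ (ftrunc f2 m) x :=
  (contDiffAt_ftrunc hfs hx).differentiableAt (by simp)

lemma pd0_ftrunc (hfs : ∀ i, ContDiff ℝ (⊤ : ℕ∞) (f2 i)) {x : Pt (n + 1)} (hx : x 0 ≠ 0) :
    pd 0 (ftrunc f2 m) x
      = -(2 * x 0) / 4 + ∑ i ∈ Finset.range (m + 1),
          -(2 * (i:ℝ)) * ((x 0) ^ (2 * i + 1))⁻¹ * f2 i (tailPt x) := by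
  rw [show (ftrunc f2 m : Pt (n+1) → ℝ) = fun x => ftrunc f2 m x from rfl, ftrunc_eq]
  have hd1 : DifferentiableAt ℝ (fun x' : Pt (n+1) => (fun s : ℝ => -s ^ 2 / 4) (x' 0)) x :=
    (hasFDerivAt_radial (hasDerivAt_negsq4 (x 0))).differentiableAt
  have hd2 : ∀ i ∈ Finset.range (m + 1), DifferentiableAt ℝ
      (fun x' : Pt (n+1) => (fun s : ℝ => (s ^ (2*i))⁻¹) (x' 0)
        * (fun z => f2 i z) (tailPt x')) x :=
    fun i _ => differentiableAt_radmul (hasDerivAt_invpow (2*i) hx)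
      ((hfs i).differentiable (by simp)).differentiableAt
  rw [pd_add hd1 (DifferentiableAt.fun_sum hd2) 0, pd_sum hd2 0]
  rw [pd_zero_radial (hasDerivAt_negsq4 (x 0))]
  congr 1
  refine Finset.sum_congr rfl fun i _ => ?_
  rw [pd_zero_radmul (hasDerivAt_invpow (2*i) hx)
    ((hfs i).differentiable (by simp)).differentiableAt]
  push_cast
  ring

lemma pdT_ftrunc (hfs : ∀ i, ContDiff ℝ (⊤ : ℕ∞) (f2 i)) {x : Pt (n + 1)} (hx : x 0 ≠ 0) (c : Fin n) :
    pd c.succ (ftrunc f2 m) x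
      = ∑ i ∈ Finset.range (m + 1), ((x 0) ^ (2 * i))⁻¹ * pd c (f2 i) (tailPt x) := by
  rw [show (ftrunc f2 m : Pt (n+1) → ℝ) = fun x => ftrunc f2 m x from rfl, ftrunc_eq]
  have hd1 : DifferentiableAt ℝ (fun x' : Pt (n+1) => (fun s : ℝ => -s ^ 2 / 4) (x' 0)) x :=
    (hasFDerivAt_radial (hasDerivAt_negsq4 (x 0))).differentiableAt
  have hd2 : ∀ i ∈ Finset.range (m + 1), DifferentiableAt ℝ
      (fun x' : Pt (n+1) => (fun s : ℝ => (s ^ (2*i))⁻¹) (x' 0)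
        * (fun z => f2 i z) (tailPt x')) x :=
    fun i _ => differentiableAt_radmul (hasDerivAt_invpow (2*i) hx)
      ((hfs i).differentiable (by simp)).differentiableAt
  rw [pd_add hd1 (DifferentiableAt.fun_sum hd2) c.succ, pd_sum hd2 c.succ]
  rw [pd_succ_radial (hasDerivAt_negsq4 (x 0))]
  rw [zero_add]
  refine Finset.sum_congr rfl fun i _ => ?_
  rw [pd_succ_radmul (hasDerivAt_invpow (2*i) hx)
    ((hfs i).differentiable (by simp)).differentiableAt]

end EntryCalc
/-! ### Chunk 5: block structure of the warped metric -/

section Warp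

variable {n : ℕ} {H : Pt (n + 1) → Matrix (Fin n) (Fin n) ℝ} {x : Pt (n + 1)}

lemma warp_00 (H : Pt (n+1) → Matrix (Fin n) (Fin n) ℝ) (x) : warp H x 0 0 = 1 := by
  simp [warp]

lemma warp_0s (H : Pt (n+1) → Matrix (Fin n) (Fin n) ℝ) (x) (j : Fin n) :
    warp H x 0 j.succ = 0 := by simp [warp]

lemma warp_s0 (H : Pt (n+1) → Matrix (Fin n) (Fin n) ℝ) (x) (j : Fin n) :
    warp H x j.succ 0 = 0 := by simp [warp]

lemma warp_ss (H : Pt (n+1) → Matrix (Fin n) (Fin n) ℝ) (x) (i j : Fin n) :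
    warp H x i.succ j.succ = H x i j := by simp [warp]

/-- `warp` of a constant matrix pattern. -/
def warpMat (A : Matrix (Fin n) (Fin n) ℝ) : Matrix (Fin (n + 1)) (Fin (n + 1)) ℝ :=
  Matrix.of fun a b =>
    Fin.cases (Fin.cases (1 : ℝ) (fun _ => 0) b) (fun i => Fin.cases 0 (fun j => A i j) b) a

lemma warpMat_00 (A : Matrix (Fin n) (Fin n) ℝ) : warpMat A 0 0 = 1 := by simp [warpMat]
lemma warpMat_0s (A : Matrix (Fin n) (Fin n) ℝ) (j : Fin n) : warpMat A 0 j.succ = 0 := by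
  simp [warpMat]
lemma warpMat_s0 (A : Matrix (Fin n) (Fin n) ℝ) (j : Fin n) : warpMat A j.succ 0 = 0 := by
  simp [warpMat]
lemma warpMat_ss (A : Matrix (Fin n) (Fin n) ℝ) (i j : Fin n) : warpMat A i.succ j.succ = A i j :=
  by simp [warpMat]

lemma warp_eq_warpMat (H : Pt (n+1) → Matrix (Fin n) (Fin n) ℝ) (x) :
    warp H x = warpMat (H x) := rfl

lemma warpMat_mul (A B : Matrix (Fin n) (Fin n) ℝ) :
    warpMat A * warpMat B = warpMat (A * B) := by
  ext a b
  rw [Matrix.mul_apply, Fin.sum_univ_succ]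
  induction a using Fin.cases with
  | zero =>
      induction b using Fin.cases with
      | zero => simp [warpMat_00, warpMat_0s, warpMat_s0]
      | succ j => simp [warpMat_00, warpMat_0s, warpMat_s0]
  | succ i =>
      induction b using Fin.cases with
      | zero => simp [warpMat_00, warpMat_0s, warpMat_s0, warpMat_ss]
      | succ j => simp [warpMat_0s, warpMat_s0, warpMat_ss, Matrix.mul_apply]

lemma warpMat_one : warpMat (1 : Matrix (Fin n) (Fin n) ℝ) = 1 := by
  ext a b
  induction a using Fin.cases with
  | zero =>
      induction b using Fin.cases with
      | zero => simp [warpMat_00, Matrix.one_apply]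
      | succ j => simp [warpMat_0s, Matrix.one_apply, (Fin.succ_ne_zero j).symm]
  | succ i =>
      induction b using Fin.cases with
      | zero => simp [warpMat_s0, Matrix.one_apply, Fin.succ_ne_zero]
      | succ j => simp [warpMat_ss, Matrix.one_apply, Fin.succ_inj]

lemma warpMat_inv (A : Matrix (Fin n) (Fin n) ℝ) (hA : IsUnit A.det) :
    (warpMat A)⁻¹ = warpMat A⁻¹ := by
  apply Matrix.inv_eq_right_inv
  rw [warpMat_mul, Matrix.mul_nonsing_inv A hA, warpMat_one]

lemma warp_inv (H : Pt (n+1) → Matrix (Fin n) (Fin n) ℝ) (x) (hA : IsUnit ((H x).det)) :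
    (warp H x)⁻¹ = warpMat (H x)⁻¹ := by
  rw [warp_eq_warpMat]; exact warpMat_inv _ hA

end Warp
/-! ### Chunk 6: Christoffel symbols of the warped metric -/

section ChristoffelWarp

variable {n : ℕ} {H : Pt (n + 1) → Matrix (Fin n) (Fin n) ℝ}

lemma funwarp00 (H : Pt (n+1) → Matrix (Fin n) (Fin n) ℝ) :
    (fun y => warp H y 0 0) = (fun _ : Pt (n+1) => (1:ℝ)) := funext fun y => warp_00 H y

lemma funwarp0s (H : Pt (n+1) → Matrix (Fin n) (Fin n) ℝ) (j : Fin n) :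
    (fun y => warp H y 0 j.succ) = (fun _ : Pt (n+1) => (0:ℝ)) := funext fun y => warp_0s H y j

lemma funwarps0 (H : Pt (n+1) → Matrix (Fin n) (Fin n) ℝ) (j : Fin n) :
    (fun y => warp H y j.succ 0) = (fun _ : Pt (n+1) => (0:ℝ)) := funext fun y => warp_s0 H y j

lemma funwarpss (H : Pt (n+1) → Matrix (Fin n) (Fin n) ℝ) (i j : Fin n) :
    (fun y => warp H y i.succ j.succ) = (fun y => H y i j) := funext fun y => warp_ss H y i j

variable {h : Pt n → Matrix (Fin n) (Fin n) ℝ}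
  {h2 : ℕ → Pt n → Matrix (Fin n) (Fin n) ℝ} {m : ℕ} {x : Pt (n + 1)}

lemma christoffel_warp_00 (c : Fin (n + 1)) :
    christoffel (warp H) c 0 0 x = 0 := by
  unfold christoffel
  rw [Fin.sum_univ_succ]
  simp [funwarp00, funwarp0s, funwarps0, pd_const]

lemma christoffel_warp_0_0s (hdet : IsUnit ((H x).det)) (k : Fin n) :
    christoffel (warp H) 0 0 k.succ x = 0 := by
  unfold christoffel
  rw [warp_inv H x hdet, Fin.sum_univ_succ]
  simp [funwarp00, funwarp0s, funwarps0, pd_const, warpMat_00, warpMat_0s]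

lemma christoffel_warp_0_s0 (hdet : IsUnit ((H x).det)) (j : Fin n) :
    christoffel (warp H) 0 j.succ 0 x = 0 := by
  unfold christoffel
  rw [warp_inv H x hdet, Fin.sum_univ_succ]
  simp [funwarp00, funwarp0s, funwarps0, pd_const, warpMat_00, warpMat_0s]

lemma christoffel_warp_s_0s (hdet : IsUnit ((H x).det)) (i k : Fin n) :
    christoffel (warp H) i.succ 0 k.succ x
      = (1/2) * ∑ q : Fin n, (H x)⁻¹ i q * pd 0 (fun y => H y k q) x := by
  unfold christoffel
  rw [warp_inv H x hdet, Fin.sum_univ_succ]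
  simp only [funwarp00, funwarp0s, funwarps0, funwarpss, pd_const, warpMat_s0, warpMat_ss,
    zero_mul, zero_add, add_zero, sub_zero, zero_sub, mul_zero]

lemma christoffel_warp_s_s0 (hdet : IsUnit ((H x).det)) (i j : Fin n) :
    christoffel (warp H) i.succ j.succ 0 x
      = (1/2) * ∑ q : Fin n, (H x)⁻¹ i q * pd 0 (fun y => H y j q) x := by
  unfold christoffel
  rw [warp_inv H x hdet, Fin.sum_univ_succ]
  simp only [funwarp00, funwarp0s, funwarps0, funwarpss, pd_const, warpMat_s0, warpMat_ss,
    zero_mul, zero_add, add_zero, sub_zero, zero_sub, mul_zero]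

lemma christoffel_warp_0_ss (hdet : IsUnit ((H x).det)) (j k : Fin n) :
    christoffel (warp H) 0 j.succ k.succ x
      = -(1/2) * pd 0 (fun y => H y j k) x := by
  unfold christoffel
  rw [warp_inv H x hdet, Fin.sum_univ_succ]
  simp only [funwarp00, funwarp0s, funwarps0, funwarpss, pd_const, warpMat_00, warpMat_0s,
    zero_mul, zero_add, add_zero, sub_zero, zero_sub, mul_zero, one_mul, Finset.sum_const_zero]
  ring

lemma christoffel_warp_sss (hdet : IsUnit ((H x).det)) (c a b : Fin n) :
    christoffel (warp H) c.succ a.succ b.succ x = christoffelT H c a b x := by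
  unfold christoffel christoffelT pdT
  rw [warp_inv H x hdet, Fin.sum_univ_succ]
  simp only [funwarp00, funwarp0s, funwarps0, funwarpss, pd_const, warpMat_s0, warpMat_ss,
    zero_mul, zero_add, add_zero, sub_zero, zero_sub, mul_zero]

end ChristoffelWarp
/-! ### Chunk 7: master identity for the tangential soliton component -/

section Master

variable {n : ℕ} {h : Pt n → Matrix (Fin n) (Fin n) ℝ}
  {h2 : ℕ → Pt n → Matrix (Fin n) (Fin n) ℝ} {f2 : ℕ → Pt n → ℝ} {m : ℕ} {x : Pt (n + 1)}

/-- specialized Christoffel values with `H1fun` plugged in. -/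
lemma W4' (hs : ∀ j k, ContDiff ℝ (⊤ : ℕ∞) fun z => h z j k)
    (hs2 : ∀ i j k, ContDiff ℝ (⊤ : ℕ∞) fun z => h2 i z j k)
    (hxx : x 0 ≠ 0) (hdet : IsUnit ((Htrunc h h2 m x).det)) (j k : Fin n) :
    christoffel (warp (Htrunc h h2 m)) 0 j.succ k.succ x = -(1/2) * H1fun h h2 m j k x := by
  rw [christoffel_warp_0_ss hdet j k, pd0_Htrunc hs hs2 hxx j k]

lemma W3a' (hs : ∀ j k, ContDiff ℝ (⊤ : ℕ∞) fun z => h z j k)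
    (hs2 : ∀ i j k, ContDiff ℝ (⊤ : ℕ∞) fun z => h2 i z j k)
    (hxx : x 0 ≠ 0) (hdet : IsUnit ((Htrunc h h2 m x).det)) (i k : Fin n) :
    christoffel (warp (Htrunc h h2 m)) i.succ 0 k.succ x
      = (1/2) * ∑ q : Fin n, (Htrunc h h2 m x)⁻¹ i q * H1fun h h2 m k q x := by
  rw [christoffel_warp_s_0s hdet i k]
  congr 1
  exact Finset.sum_congr rfl fun q _ => by rw [pd0_Htrunc hs hs2 hxx k q]

lemma W3b' (hs : ∀ j k, ContDiff ℝ (⊤ : ℕ∞) fun z => h z j k)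
    (hs2 : ∀ i j k, ContDiff ℝ (⊤ : ℕ∞) fun z => h2 i z j k)
    (hxx : x 0 ≠ 0) (hdet : IsUnit ((Htrunc h h2 m x).det)) (i j : Fin n) :
    christoffel (warp (Htrunc h h2 m)) i.succ j.succ 0 x
      = (1/2) * ∑ q : Fin n, (Htrunc h h2 m x)⁻¹ i q * H1fun h h2 m j q x := by
  rw [christoffel_warp_s_s0 hdet i j]
  congr 1
  exact Finset.sum_congr rfl fun q _ => by rw [pd0_Htrunc hs hs2 hxx j q]

theorem solitonE_tangential (hs : ∀ j k, ContDiff ℝ (⊤ : ℕ∞) fun z => h z j k)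
    (hs2 : ∀ i j k, ContDiff ℝ (⊤ : ℕ∞) fun z => h2 i z j k)
    (hfs : ∀ i, ContDiff ℝ (⊤ : ℕ∞) (f2 i))
    (hev : ∀ᶠ x' in nhds x, x' 0 ≠ 0 ∧ IsUnit ((Htrunc h h2 m x').det))
    (j k : Fin n) :
    solitonE h h2 f2 m j.succ k.succ x
      = ricciT (Htrunc h h2 m) j k x
        + hessT (Htrunc h h2 m) (ftrunc f2 m) j k x
        - (1/2) * pd 0 (H1fun h h2 m j k) x
        - (1/4) * (∑ i, ∑ q, (Htrunc h h2 m x)⁻¹ i q * H1fun h h2 m i q x)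
            * H1fun h h2 m j k x
        + (1/4) * ∑ p, ∑ q,
            (Htrunc h h2 m x)⁻¹ p q * H1fun h h2 m j p x * H1fun h h2 m k q x
        + (1/4) * ∑ p, ∑ q,
            (Htrunc h h2 m x)⁻¹ p q * H1fun h h2 m j q x * H1fun h h2 m p k x
        + (1/2) * H1fun h h2 m j k x * pd 0 (ftrunc f2 m) x
        + (1/2) * Htrunc h h2 m x j k := by
  obtain ⟨hxx, hdet⟩ := hev.self_of_nhds
  -- eventual identities for the Christoffel symbols that get differentiated
  have hevG0 : (christoffel (warp (Htrunc h h2 m)) 0 j.succ k.succ)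
      =ᶠ[nhds x] fun x' => -(1/2) * H1fun h h2 m j k x' := by
    filter_upwards [hev] with x' hx'
    exact W4' hs hs2 hx'.1 hx'.2 j k
  have hevGs : ∀ c a b : Fin n, (christoffel (warp (Htrunc h h2 m)) c.succ a.succ b.succ)
      =ᶠ[nhds x] christoffelT (Htrunc h h2 m) c a b := by
    intro c a b
    filter_upwards [hev] with x' hx'
    exact christoffel_warp_sss hx'.2 c a b
  have hevG00 : (christoffel (warp (Htrunc h h2 m)) 0 0 k.succ)
      =ᶠ[nhds x] fun _ => (0:ℝ) := by
    filter_upwards [hev] with x' hx'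
    exact christoffel_warp_0_0s hx'.2 k
  -- term 1
  have hT1 : (∑ c : Fin (n+1), pd c (christoffel (warp (Htrunc h h2 m)) c j.succ k.succ) x)
      = -(1/2) * pd 0 (H1fun h h2 m j k) x
        + ∑ i : Fin n, pdT i (christoffelT (Htrunc h h2 m) i j k) x := by
    rw [Fin.sum_univ_succ]
    congr 1
    · rw [pd_congr_nhds hevG0 0,
        pd_const_mul (differentiableAt_H1fun hs hs2 hxx j k) (-(1/2)) 0]
    · exact Finset.sum_congr rfl fun i _ => by rw [pd_congr_nhds (hevGs i j k) i.succ]; rfl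
  -- term 2
  have hT2 : (∑ c : Fin (n+1), pd j.succ (christoffel (warp (Htrunc h h2 m)) c c k.succ) x)
      = ∑ i : Fin n, pdT j (christoffelT (Htrunc h h2 m) i i k) x := by
    rw [Fin.sum_univ_succ]
    have hz : pd j.succ (christoffel (warp (Htrunc h h2 m)) 0 0 k.succ) x = 0 := by
      rw [pd_congr_nhds hevG00 j.succ, pd_const]
    rw [hz, zero_add]
    exact Finset.sum_congr rfl fun i _ => by rw [pd_congr_nhds (hevGs i i k) j.succ]; rfl
  -- term 3
  have hT3 : (∑ c : Fin (n+1), ∑ l : Fin (n+1),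
        christoffel (warp (Htrunc h h2 m)) c c l x
          * christoffel (warp (Htrunc h h2 m)) l j.succ k.succ x)
      = -(1/4) * (∑ i, ∑ q, (Htrunc h h2 m x)⁻¹ i q * H1fun h h2 m i q x)
            * H1fun h h2 m j k x
        + ∑ i, ∑ p, christoffelT (Htrunc h h2 m) i i p x
            * christoffelT (Htrunc h h2 m) p j k x := by
    rw [Fin.sum_univ_succ]
    have h0 : (∑ l : Fin (n+1), christoffel (warp (Htrunc h h2 m)) 0 0 l x
        * christoffel (warp (Htrunc h h2 m)) l j.succ k.succ x) = 0 := by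
      rw [Fin.sum_univ_succ, christoffel_warp_00]
      simp [christoffel_warp_0_0s hdet]
    rw [h0, zero_add]
    have hrow : ∀ i : Fin n, (∑ l : Fin (n+1),
        christoffel (warp (Htrunc h h2 m)) i.succ i.succ l x
          * christoffel (warp (Htrunc h h2 m)) l j.succ k.succ x)
        = ((1/2) * ∑ q, (Htrunc h h2 m x)⁻¹ i q * H1fun h h2 m i q x)
            * (-(1/2) * H1fun h h2 m j k x)
          + ∑ p, christoffelT (Htrunc h h2 m) i i p x
              * christoffelT (Htrunc h h2 m) p j k x := by
      intro i
      rw [Fin.sum_univ_succ, W3b' hs hs2 hxx hdet i i, W4' hs hs2 hxx hdet j k]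
      congr 1
      exact Finset.sum_congr rfl fun p _ => by
        rw [christoffel_warp_sss hdet i i p, christoffel_warp_sss hdet p j k]
    rw [Finset.sum_congr rfl fun i _ => hrow i, Finset.sum_add_distrib]
    congr 1
    rw [← Finset.sum_mul, ← Finset.mul_sum]
    ring
  -- term 4
  have hT4 : (∑ c : Fin (n+1), ∑ l : Fin (n+1),
        christoffel (warp (Htrunc h h2 m)) c j.succ l x
          * christoffel (warp (Htrunc h h2 m)) l c k.succ x)
      = (-(1/4)) * (∑ p, ∑ q,
            (Htrunc h h2 m x)⁻¹ p q * H1fun h h2 m j p x * H1fun h h2 m k q x)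
        + (-(1/4)) * (∑ p, ∑ q,
            (Htrunc h h2 m x)⁻¹ p q * H1fun h h2 m j q x * H1fun h h2 m p k x)
        + ∑ i, ∑ p, christoffelT (Htrunc h h2 m) i j p x
            * christoffelT (Htrunc h h2 m) p i k x := by
    rw [Fin.sum_univ_succ]
    have h0 : (∑ l : Fin (n+1), christoffel (warp (Htrunc h h2 m)) 0 j.succ l x
        * christoffel (warp (Htrunc h h2 m)) l 0 k.succ x)
        = ∑ p, (-(1/2) * H1fun h h2 m j p x)
            * ((1/2) * ∑ q, (Htrunc h h2 m x)⁻¹ p q * H1fun h h2 m k q x) := by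
      rw [Fin.sum_univ_succ, christoffel_warp_0_s0 hdet j]
      rw [zero_mul, zero_add]
      exact Finset.sum_congr rfl fun p _ => by
        rw [W4' hs hs2 hxx hdet j p, W3a' hs hs2 hxx hdet p k]
    have hrow : ∀ i : Fin n, (∑ l : Fin (n+1),
        christoffel (warp (Htrunc h h2 m)) i.succ j.succ l x
          * christoffel (warp (Htrunc h h2 m)) l i.succ k.succ x)
        = ((1/2) * ∑ q, (Htrunc h h2 m x)⁻¹ i q * H1fun h h2 m j q x)
            * (-(1/2) * H1fun h h2 m i k x)
          + ∑ p, christoffelT (Htrunc h h2 m) i j p x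
              * christoffelT (Htrunc h h2 m) p i k x := by
      intro i
      rw [Fin.sum_univ_succ, W3b' hs hs2 hxx hdet i j, W4' hs hs2 hxx hdet i k]
      congr 1
      exact Finset.sum_congr rfl fun p _ => by
        rw [christoffel_warp_sss hdet i j p, christoffel_warp_sss hdet p i k]
    rw [h0, Finset.sum_congr rfl fun i _ => hrow i, Finset.sum_add_distrib]
    have e1 : (∑ p, (-(1/2) * H1fun h h2 m j p x)
          * ((1/2) * ∑ q, (Htrunc h h2 m x)⁻¹ p q * H1fun h h2 m k q x))
        = (-(1/4)) * (∑ p, ∑ q,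
            (Htrunc h h2 m x)⁻¹ p q * H1fun h h2 m j p x * H1fun h h2 m k q x) := by
      rw [Finset.mul_sum]
      refine Finset.sum_congr rfl fun p _ => ?_
      rw [Finset.mul_sum, Finset.mul_sum, Finset.mul_sum]
      refine Finset.sum_congr rfl fun q _ => ?_
      ring
    have e2 : (∑ i, ((1/2) * ∑ q, (Htrunc h h2 m x)⁻¹ i q * H1fun h h2 m j q x)
          * (-(1/2) * H1fun h h2 m i k x))
        = (-(1/4)) * (∑ p, ∑ q,
            (Htrunc h h2 m x)⁻¹ p q * H1fun h h2 m j q x * H1fun h h2 m p k x) := by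
      rw [Finset.mul_sum]
      refine Finset.sum_congr rfl fun p _ => ?_
      rw [Finset.mul_sum, Finset.sum_mul, Finset.mul_sum]
      refine Finset.sum_congr rfl fun q _ => ?_
      ring
    rw [e1, e2]
    ring
  -- hessian
  have hhes : hessian (warp (Htrunc h h2 m)) (ftrunc f2 m) j.succ k.succ x
      = hessT (Htrunc h h2 m) (ftrunc f2 m) j k x
        + (1/2) * H1fun h h2 m j k x * pd 0 (ftrunc f2 m) x := by
    unfold hessian hessT
    rw [Fin.sum_univ_succ, W4' hs hs2 hxx hdet j k]
    have : (∑ i : Fin n, christoffel (warp (Htrunc h h2 m)) i.succ j.succ k.succ x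
        * pd i.succ (ftrunc f2 m) x)
        = ∑ i : Fin n, christoffelT (Htrunc h h2 m) i j k x * pdT i (ftrunc f2 m) x := by
      exact Finset.sum_congr rfl fun i _ => by rw [christoffel_warp_sss hdet i j k]; rfl
    rw [this]
    unfold pdT
    ring
  -- assemble
  unfold solitonE ricci ricciT
  rw [hT1, hT2, hT3, hT4, hhes, warp_ss]
  ring
/-! ### Chunk 8a: conversion to the rescaled family -/

section Convert

variable {n : ℕ} {h : Pt n → Matrix (Fin n) (Fin n) ℝ}
  {h2 : ℕ → Pt n → Matrix (Fin n) (Fin n) ℝ} {f2 : ℕ → Pt n → ℝ} {m : ℕ}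

lemma tpow_even {r : ℝ} (i : ℕ) : ((r ^ (2 * i) : ℝ))⁻¹ = ((r ^ 2)⁻¹) ^ i := by
  rw [pow_mul, inv_pow]

lemma contDiff_Kmat_entry (hs : ∀ j k, ContDiff ℝ (⊤ : ℕ∞) fun z => h z j k)
    (hs2 : ∀ i j k, ContDiff ℝ (⊤ : ℕ∞) fun z => h2 i z j k) (t : ℝ) (j k : Fin n) :
    ContDiff ℝ (⊤ : ℕ∞) (fun z => Kmat h h2 m t z j k) := by
  unfold Kmat
  exact (hs j k).add (ContDiff.sum fun i _ => contDiff_const.mul (hs2 i j k))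

lemma pd_Kmat_entry (hs : ∀ j k, ContDiff ℝ (⊤ : ℕ∞) fun z => h z j k)
    (hs2 : ∀ i j k, ContDiff ℝ (⊤ : ℕ∞) fun z => h2 i z j k) (t : ℝ) (a j k : Fin n) (z : Pt n) :
    pd a (fun z' => Kmat h h2 m t z' j k) z
      = pd a (fun z' => h z' j k) z
        + ∑ i ∈ Finset.range (m + 1), t ^ (i + 1) * pd a (fun z' => h2 i z' j k) z := by
  have hd2 : ∀ i ∈ Finset.range (m+1), DifferentiableAt ℝ
      (fun z' : Pt n => t ^ (i+1) * h2 i z' j k) z :=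
    fun i _ => (((hs2 i j k).differentiable (by simp)) z).const_mul _
  have he : (fun z' => Kmat h h2 m t z' j k)
      = fun z' => h z' j k + ∑ i ∈ Finset.range (m + 1), t ^ (i + 1) * h2 i z' j k := rfl
  rw [he, pd_add (((hs j k).differentiable (by simp)) z) (DifferentiableAt.fun_sum hd2) a, pd_sum hd2 a]
  congr 1
  exact Finset.sum_congr rfl fun i _ =>
    pd_const_mul (((hs2 i j k).differentiable (by simp)) z) _ a

lemma det_Htrunc_consPt {r : ℝ} (hr : r ≠ 0) (y : Pt n) :
    (Htrunc h h2 m (consPt r y)).det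
      = ((r : ℝ) ^ 2) ^ n * (Kmat h h2 m ((r ^ 2)⁻¹) y).det := by
  rw [Htrunc_consPt h h2 m hr y, Matrix.det_smul, Fintype.card_fin]

lemma christoffelT_consPt (hs : ∀ j k, ContDiff ℝ (⊤ : ℕ∞) fun z => h z j k)
    (hs2 : ∀ i j k, ContDiff ℝ (⊤ : ℕ∞) fun z => h2 i z j k) {r : ℝ} (hr : r ≠ 0) (z : Pt n)
    (c a b : Fin n) :
    christoffelT (Htrunc h h2 m) c a b (consPt r z)
      = christoffel (Kmat h h2 m ((r ^ 2)⁻¹)) c a b z := by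
  have hx0 : (consPt r z) 0 ≠ 0 := by rw [consPt_zero_apply]; exact hr
  have key : ∀ a b l : Fin n, pd a.succ (fun x' => Htrunc h h2 m x' b l) (consPt r z)
      = r ^ 2 * pd a (fun z' => Kmat h h2 m ((r ^ 2)⁻¹) z' b l) z := by
    intro a b l
    rw [pdT_Htrunc hs hs2 hx0 a b l, pd_Kmat_entry hs hs2 _ a b l z]
    rw [consPt_zero_apply, tailPt_consPt, mul_add, Finset.mul_sum]
    congr 1
    refine Finset.sum_congr rfl fun i _ => ?_
    rw [← mul_assoc, tpow_sq hr i]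
  unfold christoffelT christoffel pdT
  rw [Htrunc_consPt h h2 m hr z, matrix_smul_inv _ (pow_ne_zero 2 hr) _]
  congr 1
  refine Finset.sum_congr rfl fun l _ => ?_
  rw [key a b l, key b a l, key l a b, Matrix.smul_apply, smul_eq_mul]
  have hr2 : (r : ℝ) ^ 2 ≠ 0 := pow_ne_zero 2 hr
  field_simp

lemma contDiffAt_christoffelT (hs : ∀ j k, ContDiff ℝ (⊤ : ℕ∞) fun z => h z j k)
    (hs2 : ∀ i j k, ContDiff ℝ (⊤ : ℕ∞) fun z => h2 i z j k) {x : Pt (n+1)} (hxx : x 0 ≠ 0)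
    (hdet : (Htrunc h h2 m x).det ≠ 0) (c a b : Fin n) :
    ContDiffAt ℝ (⊤ : ℕ∞) (christoffelT (Htrunc h h2 m) c a b) x := by
  unfold christoffelT pdT
  refine contDiffAt_const.mul (ContDiffAt.sum fun l _ => ContDiffAt.mul ?_ ?_)
  · exact contDiffAt_matinv (fun i j => contDiffAt_Htrunc hs hs2 hxx i j) hdet c l
  · exact (((contDiffAt_Htrunc hs hs2 hxx b l).pd' a.succ).add
      ((contDiffAt_Htrunc hs hs2 hxx a l).pd' b.succ)).sub
      ((contDiffAt_Htrunc hs hs2 hxx a b).pd' l.succ)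

lemma ricciT_consPt (hs : ∀ j k, ContDiff ℝ (⊤ : ℕ∞) fun z => h z j k)
    (hs2 : ∀ i j k, ContDiff ℝ (⊤ : ℕ∞) fun z => h2 i z j k) {r : ℝ} (hr : r ≠ 0) {y : Pt n}
    (hdet : (Kmat h h2 m ((r ^ 2)⁻¹) y).det ≠ 0) (j k : Fin n) :
    ricciT (Htrunc h h2 m) j k (consPt r y)
      = ricci (Kmat h h2 m ((r ^ 2)⁻¹)) j k y := by
  have hx0 : (consPt r y) 0 ≠ 0 := by rw [consPt_zero_apply]; exact hr
  have hdetH : (Htrunc h h2 m (consPt r y)).det ≠ 0 := by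
    rw [det_Htrunc_consPt hr y]
    exact mul_ne_zero (pow_ne_zero _ (pow_ne_zero _ hr)) hdet
  have hfun : ∀ c a b : Fin n, (fun z => christoffelT (Htrunc h h2 m) c a b (consPt r z))
      = christoffel (Kmat h h2 m ((r ^ 2)⁻¹)) c a b :=
    fun c a b => funext fun z => christoffelT_consPt hs hs2 hr z c a b
  unfold ricciT ricci
  congr 1
  · congr 1
    · congr 1
      · refine Finset.sum_congr rfl fun c _ => ?_
        rw [pdT_consPt ((contDiffAt_christoffelT hs hs2 hx0 hdetH c j k).differentiableAt
          (by simp)) c, hfun c j k]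
      · refine Finset.sum_congr rfl fun c _ => ?_
        rw [pdT_consPt ((contDiffAt_christoffelT hs hs2 hx0 hdetH c c k).differentiableAt
          (by simp)) j, hfun c c k]
    · refine Finset.sum_congr rfl fun c _ => Finset.sum_congr rfl fun l _ => ?_
      rw [christoffelT_consPt hs hs2 hr y c c l, christoffelT_consPt hs hs2 hr y l j k]
  · refine Finset.sum_congr rfl fun c _ => Finset.sum_congr rfl fun l _ => ?_
    rw [christoffelT_consPt hs hs2 hr y c j l, christoffelT_consPt hs hs2 hr y l c k]

lemma hessT_consPt (hs : ∀ j k, ContDiff ℝ (⊤ : ℕ∞) fun z => h z j k)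
    (hs2 : ∀ i j k, ContDiff ℝ (⊤ : ℕ∞) fun z => h2 i z j k) (hfs : ∀ i, ContDiff ℝ (⊤ : ℕ∞) (f2 i))
    {r : ℝ} (hr : r ≠ 0) {y : Pt n} (j k : Fin n) :
    hessT (Htrunc h h2 m) (ftrunc f2 m) j k (consPt r y)
      = (∑ i ∈ Finset.range (m + 1), ((r ^ 2)⁻¹) ^ i * pd j (pd k (f2 i)) y)
        - ∑ c, christoffelT (Htrunc h h2 m) c j k (consPt r y)
            * (∑ i ∈ Finset.range (m + 1), ((r ^ 2)⁻¹) ^ i * pd c (f2 i) y) := by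
  have hx0 : (consPt r y) 0 ≠ 0 := by rw [consPt_zero_apply]; exact hr
  have hfund : ∀ c : Fin n, (fun z => pd c.succ (ftrunc f2 m) (consPt r z))
      = fun z => ∑ i ∈ Finset.range (m + 1), ((r ^ 2)⁻¹) ^ i * pd c (f2 i) z := by
    intro c
    funext z
    have hx0' : (consPt r z) 0 ≠ 0 := by rw [consPt_zero_apply]; exact hr
    rw [pdT_ftrunc hfs hx0' c]
    refine Finset.sum_congr rfl fun i _ => ?_
    rw [consPt_zero_apply, tailPt_consPt, tpow_even i]
  unfold hessT pdT
  congr 1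
  · rw [pd_succ_consPt (((contDiffAt_ftrunc hfs hx0).pd' k.succ).differentiableAt (by simp)) j]
    rw [hfund k]
    have hd : ∀ i ∈ Finset.range (m+1), DifferentiableAt ℝ
        (fun z : Pt n => ((r ^ 2)⁻¹) ^ i * pd k (f2 i) z) y :=
      fun i _ => (((hfs i).contDiffAt.pd' k).differentiableAt (by simp)).const_mul _
    rw [pd_sum hd j]
    refine Finset.sum_congr rfl fun i _ => ?_
    exact pd_const_mul (((hfs i).contDiffAt.pd' k).differentiableAt (by simp)) _ j
  · refine Finset.sum_congr rfl fun c _ => ?_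
    congr 1
    have := congrFun (hfund c) y
    simpa using this

lemma H1fun_consPt {r : ℝ} (hr : r ≠ 0) (y : Pt n) (j k : Fin n) :
    H1fun h h2 m j k (consPt r y)
      = r * (2 * h y j k + ∑ i ∈ Finset.range (m + 1),
          -(2 * (i : ℝ)) * ((r ^ 2)⁻¹) ^ (i + 1) * h2 i y j k) := by
  unfold H1fun
  rw [consPt_zero_apply, tailPt_consPt, mul_add, Finset.mul_sum]
  congr 1
  · ring
  · refine Finset.sum_congr rfl fun i _ => ?_
    rw [← tpow_one hr i]
    ring

lemma pd0_H1fun_consPt (hs : ∀ j k, ContDiff ℝ (⊤ : ℕ∞) fun z => h z j k)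
    (hs2 : ∀ i j k, ContDiff ℝ (⊤ : ℕ∞) fun z => h2 i z j k) {r : ℝ} (hr : r ≠ 0) (y : Pt n)
    (j k : Fin n) :
    pd 0 (H1fun h h2 m j k) (consPt r y)
      = 2 * h y j k + ∑ i ∈ Finset.range (m + 1),
          (2 * (i : ℝ)) * (2 * (i : ℝ) + 1) * ((r ^ 2)⁻¹) ^ (i + 1) * h2 i y j k := by
  have hx0 : (consPt r y) 0 ≠ 0 := by rw [consPt_zero_apply]; exact hr
  rw [pd0_H1fun hs hs2 hx0 j k, consPt_zero_apply, tailPt_consPt]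
  congr 1
  refine Finset.sum_congr rfl fun i _ => ?_
  rw [tpow_base hr i]

lemma pd0_ftrunc_consPt (hfs : ∀ i, ContDiff ℝ (⊤ : ℕ∞) (f2 i)) {r : ℝ} (hr : r ≠ 0) (y : Pt n) :
    pd 0 (ftrunc f2 m) (consPt r y)
      = r * (-(1/2) + ∑ i ∈ Finset.range (m + 1),
          -(2 * (i : ℝ)) * ((r ^ 2)⁻¹) ^ (i + 1) * f2 i y) := by
  have hx0 : (consPt r y) 0 ≠ 0 := by rw [consPt_zero_apply]; exact hr
  rw [pd0_ftrunc hfs hx0, consPt_zero_apply, tailPt_consPt, mul_add, Finset.mul_sum]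
  congr 1
  · ring
  · refine Finset.sum_congr rfl fun i _ => ?_
    rw [← tpow_one hr i]
    ring

lemma Hinv_consPt {r : ℝ} (hr : r ≠ 0) (y : Pt n) (p q : Fin n) :
    (Htrunc h h2 m (consPt r y))⁻¹ p q
      = (r ^ 2)⁻¹ * (Kmat h h2 m ((r ^ 2)⁻¹) y)⁻¹ p q := by
  rw [Htrunc_consPt h h2 m hr y, matrix_smul_inv _ (pow_ne_zero 2 hr) _, Matrix.smul_apply,
    smul_eq_mul]

lemma Htrunc_entry_consPt {r : ℝ} (hr : r ≠ 0) (y : Pt n) (j k : Fin n) :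
    Htrunc h h2 m (consPt r y) j k = r ^ 2 * Kmat h h2 m ((r ^ 2)⁻¹) y j k := by
  rw [Htrunc_consPt h h2 m hr y, Matrix.smul_apply, smul_eq_mul]

end Convert
/-! ### Chunk 8b: continuity in the parameter t at t = 0 -/

section TCont

variable {n : ℕ} {h : Pt n → Matrix (Fin n) (Fin n) ℝ}
  {h2 : ℕ → Pt n → Matrix (Fin n) (Fin n) ℝ} {f2 : ℕ → Pt n → ℝ} {m : ℕ}

lemma ContDiff.pd'' {F : Pt n → ℝ} (hF : ContDiff ℝ (⊤ : ℕ∞) F) (i : Fin n) :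
    ContDiff ℝ (⊤ : ℕ∞) (pd i F) :=
  contDiff_iff_contDiffAt.2 fun _ => hF.contDiffAt.pd' i

/-- slice partial derivative through the product structure. -/
lemma pd_slice {G : ℝ × Pt n → ℝ} {t : ℝ} {y : Pt n} (hG : DifferentiableAt ℝ G (t, y))
    (c : Fin n) :
    pd c (fun z => G (t, z)) y = fderiv ℝ G (t, y) ((0 : ℝ), EuclideanSpace.single c 1) := by
  unfold pd
  have hmk : HasFDerivAt (fun z : Pt n => ((t, z) : ℝ × Pt n))
      (ContinuousLinearMap.inr ℝ ℝ (Pt n)) y := hasFDerivAt_prodMk_right t y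
  have hcomp := (hG.hasFDerivAt.comp y hmk).fderiv
  have h3 : fderiv ℝ (fun z => G (t, z)) y
      = (fderiv ℝ G (t, y)).comp (ContinuousLinearMap.inr ℝ ℝ (Pt n)) := hcomp
  rw [h3, ContinuousLinearMap.comp_apply, ContinuousLinearMap.inr_apply]

lemma Kmat_joint_eq (j k : Fin n) :
    (fun p : ℝ × Pt n => Kmat h h2 m p.1 p.2 j k)
      = fun p => h p.2 j k + ∑ i ∈ Finset.range (m + 1), p.1 ^ (i + 1) * h2 i p.2 j k := rfl

lemma contDiff_Kmat_joint (hs : ∀ j k, ContDiff ℝ (⊤ : ℕ∞) fun z => h z j k)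
    (hs2 : ∀ i j k, ContDiff ℝ (⊤ : ℕ∞) fun z => h2 i z j k) (j k : Fin n) :
    ContDiff ℝ (⊤ : ℕ∞) (fun p : ℝ × Pt n => Kmat h h2 m p.1 p.2 j k) := by
  rw [Kmat_joint_eq]
  exact ((hs j k).comp contDiff_snd).add (ContDiff.sum fun i _ =>
    ((contDiff_fst.pow (i + 1)).mul ((hs2 i j k).comp contDiff_snd)))

/-- the explicit joint-variable formula for the Christoffel symbols of `Kmat`. -/
def pdKfun (h : Pt n → Matrix (Fin n) (Fin n) ℝ) (h2 : ℕ → Pt n → Matrix (Fin n) (Fin n) ℝ)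
    (m : ℕ) (a b l : Fin n) (p : ℝ × Pt n) : ℝ :=
  pd a (fun z' => h z' b l) p.2
    + ∑ i ∈ Finset.range (m + 1), p.1 ^ (i + 1) * pd a (fun z' => h2 i z' b l) p.2

def Efun (h : Pt n → Matrix (Fin n) (Fin n) ℝ) (h2 : ℕ → Pt n → Matrix (Fin n) (Fin n) ℝ)
    (m : ℕ) (c a b : Fin n) (p : ℝ × Pt n) : ℝ :=
  (1/2) * ∑ l, ((Kmat h h2 m p.1 p.2).det)⁻¹ * (Kmat h h2 m p.1 p.2).adjugate c l
    * (pdKfun h h2 m a b l p + pdKfun h h2 m b a l p - pdKfun h h2 m l a b p)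

lemma contDiff_pdKfun (hs : ∀ j k, ContDiff ℝ (⊤ : ℕ∞) fun z => h z j k)
    (hs2 : ∀ i j k, ContDiff ℝ (⊤ : ℕ∞) fun z => h2 i z j k) (a b l : Fin n) :
    ContDiff ℝ (⊤ : ℕ∞) (pdKfun h h2 m a b l) := by
  unfold pdKfun
  refine (((hs b l).pd'' a).comp contDiff_snd).add (ContDiff.sum fun i _ => ?_)
  exact (contDiff_fst.pow (i + 1)).mul (((hs2 i b l).pd'' a).comp contDiff_snd)

lemma christoffel_Kmat_eq_Efun (hs : ∀ j k, ContDiff ℝ (⊤ : ℕ∞) fun z => h z j k)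
    (hs2 : ∀ i j k, ContDiff ℝ (⊤ : ℕ∞) fun z => h2 i z j k) (t : ℝ) (z : Pt n) (c a b : Fin n) :
    christoffel (Kmat h h2 m t) c a b z = Efun h h2 m c a b (t, z) := by
  unfold christoffel Efun
  congr 1
  refine Finset.sum_congr rfl fun l _ => ?_
  rw [matinv_entry_eq]
  congr 1
  unfold pdKfun
  rw [pd_Kmat_entry hs hs2 t a b l z, pd_Kmat_entry hs hs2 t b a l z,
    pd_Kmat_entry hs hs2 t l a b z]

lemma Kmat_zero_fun : Kmat h h2 m 0 = h := funext fun z => Kmat_zero h h2 m z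

lemma contDiffAt_Efun (hs : ∀ j k, ContDiff ℝ (⊤ : ℕ∞) fun z => h z j k)
    (hs2 : ∀ i j k, ContDiff ℝ (⊤ : ℕ∞) fun z => h2 i z j k) {y : Pt n} (hd : (h y).det ≠ 0)
    (c a b : Fin n) :
    ContDiffAt ℝ (⊤ : ℕ∞) (Efun h h2 m c a b) ((0 : ℝ), y) := by
  have hdet0 : (Kmat h h2 m (0:ℝ) y).det ≠ 0 := by
    rw [Kmat_zero_fun]; exact hd
  have hdetC : ContDiffAt ℝ (⊤ : ℕ∞) (fun p : ℝ × Pt n => (Kmat h h2 m p.1 p.2).det) ((0:ℝ), y) :=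
    contDiffAt_det fun i j => (contDiff_Kmat_joint hs hs2 i j).contDiffAt
  unfold Efun
  refine contDiffAt_const.mul (ContDiffAt.sum fun l _ => ContDiffAt.mul (ContDiffAt.mul ?_ ?_) ?_)
  · exact hdetC.inv hdet0
  · exact contDiffAt_adjugate (fun i j => (contDiff_Kmat_joint hs hs2 i j).contDiffAt) c l
  · exact (((contDiff_pdKfun hs hs2 a b l).contDiffAt).add
      ((contDiff_pdKfun hs hs2 b a l).contDiffAt)).sub
      ((contDiff_pdKfun hs hs2 l a b).contDiffAt)

/-- continuity of the Christoffel symbols of `Kmat` in `t`. -/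
lemma tendsto_christoffel_Kmat (hs : ∀ j k, ContDiff ℝ (⊤ : ℕ∞) fun z => h z j k)
    (hs2 : ∀ i j k, ContDiff ℝ (⊤ : ℕ∞) fun z => h2 i z j k) {y : Pt n} (hd : (h y).det ≠ 0)
    (c a b : Fin n) :
    Filter.Tendsto (fun t => christoffel (Kmat h h2 m t) c a b y) (nhds 0)
      (nhds (christoffel h c a b y)) := by
  have hE := (contDiffAt_Efun (m := m) hs hs2 hd c a b).continuousAt
  have hline : Filter.Tendsto (fun t : ℝ => ((t, y) : ℝ × Pt n)) (nhds 0) (nhds ((0:ℝ), y)) :=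
    (continuous_id.prodMk continuous_const).tendsto 0
  have hcomp := hE.tendsto.comp hline
  have hval : Efun h h2 m c a b ((0:ℝ), y) = christoffel h c a b y := by
    rw [← christoffel_Kmat_eq_Efun hs hs2 0 y c a b, Kmat_zero_fun]
  rw [hval] at hcomp
  refine hcomp.congr fun t => ?_
  exact (christoffel_Kmat_eq_Efun hs hs2 t y c a b).symm

/-- continuity of `pd` of the Christoffel symbols of `Kmat` in `t`. -/
lemma tendsto_pd_christoffel_Kmat (hs : ∀ j k, ContDiff ℝ (⊤ : ℕ∞) fun z => h z j k)
    (hs2 : ∀ i j k, ContDiff ℝ (⊤ : ℕ∞) fun z => h2 i z j k) {y : Pt n} (hd : (h y).det ≠ 0)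
    (e c a b : Fin n) :
    Filter.Tendsto (fun t => pd e (christoffel (Kmat h h2 m t) c a b) y) (nhds 0)
      (nhds (pd e (christoffel h c a b) y)) := by
  have hE := contDiffAt_Efun (m := m) hs hs2 hd c a b
  have hline : Filter.Tendsto (fun t : ℝ => ((t, y) : ℝ × Pt n)) (nhds 0) (nhds ((0:ℝ), y)) :=
    (continuous_id.prodMk continuous_const).tendsto 0
  -- eventual differentiability along the line
  have hev1 : ∀ᶠ p in nhds ((0:ℝ), y), ContDiffAt ℝ 1 (Efun h h2 m c a b) p :=
    (hE.of_le (by simp)).eventually (by simp)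
  have hevd : ∀ᶠ t in nhds (0:ℝ), DifferentiableAt ℝ (Efun h h2 m c a b) (t, y) := by
    filter_upwards [hline.eventually hev1] with t ht
    exact ht.differentiableAt one_ne_zero
  -- the continuous replacement
  have hfd : ContinuousAt (fderiv ℝ (Efun h h2 m c a b)) ((0:ℝ), y) :=
    (hE.fderiv_right (m := (⊤ : ℕ∞)) (by simp)).continuousAt
  have hg : Filter.Tendsto
      (fun t => fderiv ℝ (Efun h h2 m c a b) (t, y) ((0:ℝ), EuclideanSpace.single e 1))
      (nhds 0) (nhds (fderiv ℝ (Efun h h2 m c a b) ((0:ℝ), y)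
        ((0:ℝ), EuclideanSpace.single e 1))) := by
    have happ : Continuous (fun L : (ℝ × Pt n) →L[ℝ] ℝ =>
        L ((0:ℝ), EuclideanSpace.single e 1)) :=
      (ContinuousLinearMap.apply ℝ ℝ (((0:ℝ), EuclideanSpace.single e 1) : ℝ × Pt n)).continuous
    exact (happ.tendsto _).comp (hfd.tendsto.comp hline)
  -- identify values
  have hid : ∀ t, DifferentiableAt ℝ (Efun h h2 m c a b) (t, y) →
      pd e (christoffel (Kmat h h2 m t) c a b) y
        = fderiv ℝ (Efun h h2 m c a b) (t, y) ((0:ℝ), EuclideanSpace.single e 1) := by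
    intro t ht
    have hfun : christoffel (Kmat h h2 m t) c a b = fun z => Efun h h2 m c a b (t, z) :=
      funext fun z => christoffel_Kmat_eq_Efun hs hs2 t z c a b
    rw [hfun, pd_slice ht e]
  have hval : fderiv ℝ (Efun h h2 m c a b) ((0:ℝ), y) ((0:ℝ), EuclideanSpace.single e 1)
      = pd e (christoffel h c a b) y := by
    have hd0 : DifferentiableAt ℝ (Efun h h2 m c a b) ((0:ℝ), y) :=
      hE.differentiableAt (by simp)
    rw [← hid 0 hd0, Kmat_zero_fun]
  rw [← hval]
  refine hg.congr' ?_
  filter_upwards [hevd] with t ht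
  exact (hid t ht).symm

/-- continuity of the inverse of `Kmat` in `t`. -/
lemma tendsto_Kinv (hs : ∀ j k, ContDiff ℝ (⊤ : ℕ∞) fun z => h z j k)
    (hs2 : ∀ i j k, ContDiff ℝ (⊤ : ℕ∞) fun z => h2 i z j k) {y : Pt n} (hd : (h y).det ≠ 0)
    (p q : Fin n) :
    Filter.Tendsto (fun t => (Kmat h h2 m t y)⁻¹ p q) (nhds 0) (nhds ((h y)⁻¹ p q)) := by
  have hent : ∀ i j, ContDiffAt ℝ (⊤ : ℕ∞) (fun t : ℝ => Kmat h h2 m t y i j) 0 := by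
    intro i j
    have : (fun t : ℝ => Kmat h h2 m t y i j)
        = fun t => h y i j + ∑ i' ∈ Finset.range (m + 1), t ^ (i' + 1) * h2 i' y i j := rfl
    rw [this]
    exact contDiffAt_const.add (ContDiffAt.sum fun i' _ =>
      (contDiffAt_id.pow (i' + 1)).mul contDiffAt_const)
  have hdet0 : (Kmat h h2 m (0:ℝ) y).det ≠ 0 := by rw [Kmat_zero_fun]; exact hd
  have hcd : ContDiffAt ℝ (⊤ : ℕ∞) (fun t : ℝ => (Kmat h h2 m t y)⁻¹ p q) 0 :=
    contDiffAt_matinv hent hdet0 p q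
  have := hcd.continuousAt.tendsto
  have hval : (Kmat h h2 m (0:ℝ) y)⁻¹ p q = (h y)⁻¹ p q := by rw [Kmat_zero_fun]
  rwa [hval] at this

/-- continuity of the Ricci curvature of `Kmat` in `t`. -/
lemma tendsto_ricci_Kmat (hs : ∀ j k, ContDiff ℝ (⊤ : ℕ∞) fun z => h z j k)
    (hs2 : ∀ i j k, ContDiff ℝ (⊤ : ℕ∞) fun z => h2 i z j k) {y : Pt n} (hd : (h y).det ≠ 0)
    (j k : Fin n) :
    Filter.Tendsto (fun t => ricci (Kmat h h2 m t) j k y) (nhds 0)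
      (nhds (ricci h j k y)) := by
  unfold ricci
  refine Filter.Tendsto.sub (Filter.Tendsto.add (Filter.Tendsto.sub ?_ ?_) ?_) ?_
  · exact tendsto_finset_sum _ fun c _ => tendsto_pd_christoffel_Kmat hs hs2 hd c c j k
  · exact tendsto_finset_sum _ fun c _ => tendsto_pd_christoffel_Kmat hs hs2 hd j c c k
  · exact tendsto_finset_sum _ fun c _ => tendsto_finset_sum _ fun l _ =>
      (tendsto_christoffel_Kmat hs hs2 hd c c l).mul
        (tendsto_christoffel_Kmat hs hs2 hd l j k)
  · exact tendsto_finset_sum _ fun c _ => tendsto_finset_sum _ fun l _ =>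
      (tendsto_christoffel_Kmat hs hs2 hd c j l).mul
        (tendsto_christoffel_Kmat hs hs2 hd l c k)

end TCont
/-! ### Chunk 8c: matrix identities and the t-form of the soliton component -/

section MatId

variable {N : ℕ}

lemma symm_apply {A : Matrix (Fin N) (Fin N) ℝ} (hA : A.IsSymm) (i j : Fin N) :
    A i j = A j i := by
  conv_lhs => rw [← hA]
  rfl

lemma inv_symm {A : Matrix (Fin N) (Fin N) ℝ} (hA : A.IsSymm) : (A⁻¹).IsSymm := by
  unfold Matrix.IsSymm
  rw [Matrix.transpose_nonsing_inv, hA.eq]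

lemma sum_inv_mul_self {A : Matrix (Fin N) (Fin N) ℝ} (hA : A.IsSymm) (hdet : IsUnit A.det) :
    (∑ i, ∑ q, A⁻¹ i q * A i q) = (N : ℝ) := by
  have hinner : ∀ i, (∑ q, A⁻¹ i q * A i q) = 1 := by
    intro i
    have : (∑ q, A⁻¹ i q * A i q) = (A⁻¹ * A) i i := by
      rw [Matrix.mul_apply]
      exact Finset.sum_congr rfl fun q _ => by rw [symm_apply hA i q]
    rw [this, Matrix.nonsing_inv_mul A hdet, Matrix.one_apply_eq]
  rw [Finset.sum_congr rfl fun i _ => hinner i]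
  simp

lemma sum_sandwich1 {A : Matrix (Fin N) (Fin N) ℝ} (hA : A.IsSymm) (hdet : IsUnit A.det)
    (j k : Fin N) : (∑ p, ∑ q, A⁻¹ p q * A j p * A k q) = A j k := by
  have hinner : ∀ p, (∑ q, A⁻¹ p q * A k q) = (1 : Matrix (Fin N) (Fin N) ℝ) p k := by
    intro p
    rw [← Matrix.nonsing_inv_mul A hdet, Matrix.mul_apply]
    exact Finset.sum_congr rfl fun q _ => by rw [symm_apply hA k q]
  have hstep : ∀ p, (∑ q, A⁻¹ p q * A j p * A k q)
      = A j p * (1 : Matrix (Fin N) (Fin N) ℝ) p k := by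
    intro p
    rw [← hinner p, Finset.mul_sum]
    exact Finset.sum_congr rfl fun q _ => by ring
  rw [Finset.sum_congr rfl fun p _ => hstep p]
  simp [Matrix.one_apply]

lemma sum_sandwich2 {A : Matrix (Fin N) (Fin N) ℝ} (hA : A.IsSymm) (hdet : IsUnit A.det)
    (j k : Fin N) : (∑ p, ∑ q, A⁻¹ p q * A j q * A p k) = A j k := by
  rw [Finset.sum_comm]
  have hinner : ∀ q, (∑ p, A⁻¹ q p * A p k) = (1 : Matrix (Fin N) (Fin N) ℝ) q k := by
    intro q
    rw [← Matrix.nonsing_inv_mul A hdet, Matrix.mul_apply]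
  have hstep : ∀ q, (∑ p, A⁻¹ p q * A j q * A p k)
      = A j q * (1 : Matrix (Fin N) (Fin N) ℝ) q k := by
    intro q
    rw [← hinner q, Finset.mul_sum]
    refine Finset.sum_congr rfl fun p _ => ?_
    rw [symm_apply (inv_symm hA) p q]
    ring
  rw [Finset.sum_congr rfl fun q _ => hstep q]
  simp [Matrix.one_apply]

end MatId

section TForm

variable {n : ℕ} {h : Pt n → Matrix (Fin n) (Fin n) ℝ}
  {h2 : ℕ → Pt n → Matrix (Fin n) (Fin n) ℝ} {f2 : ℕ → Pt n → ℝ} {m : ℕ}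

/-- abbreviations for the t-side scalar data -/
def P1t (h : Pt n → Matrix (Fin n) (Fin n) ℝ) (h2 : ℕ → Pt n → Matrix (Fin n) (Fin n) ℝ)
    (m : ℕ) (y : Pt n) (j k : Fin n) (t : ℝ) : ℝ :=
  2 * h y j k + ∑ i ∈ Finset.range (m + 1), -(2 * (i : ℝ)) * t ^ (i + 1) * h2 i y j k

def P2t (h : Pt n → Matrix (Fin n) (Fin n) ℝ) (h2 : ℕ → Pt n → Matrix (Fin n) (Fin n) ℝ)
    (m : ℕ) (y : Pt n) (j k : Fin n) (t : ℝ) : ℝ :=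
  2 * h y j k + ∑ i ∈ Finset.range (m + 1),
    (2 * (i : ℝ)) * (2 * (i : ℝ) + 1) * t ^ (i + 1) * h2 i y j k

def Q1t (f2 : ℕ → Pt n → ℝ) (m : ℕ) (y : Pt n) (t : ℝ) : ℝ :=
  -(1/2) + ∑ i ∈ Finset.range (m + 1), -(2 * (i : ℝ)) * t ^ (i + 1) * f2 i y

def Wt (h : Pt n → Matrix (Fin n) (Fin n) ℝ) (h2 : ℕ → Pt n → Matrix (Fin n) (Fin n) ℝ)
    (f2 : ℕ → Pt n → ℝ) (m : ℕ) (y : Pt n) (j k : Fin n) (t : ℝ) : ℝ :=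
  2 * h y j k * (∑ i ∈ Finset.range (m + 1), -(2 * (i : ℝ)) * t ^ i * f2 i y)
    - (∑ i ∈ Finset.range (m + 1), -(2 * (i : ℝ)) * t ^ i * h2 i y j k) / 2
    + t * ((∑ i ∈ Finset.range (m + 1), -(2 * (i : ℝ)) * t ^ i * h2 i y j k)
        * (∑ i ∈ Finset.range (m + 1), -(2 * (i : ℝ)) * t ^ i * f2 i y))
    + (∑ i ∈ Finset.range (m + 1), t ^ i * h2 i y j k)

/-- the key polynomial identity making the `r²`-terms cancel. -/
lemma P1_Q1_K (y : Pt n) (j k : Fin n) (t : ℝ) :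
    P1t h h2 m y j k t * Q1t f2 m y t + Kmat h h2 m t y j k
      = t * Wt h h2 f2 m y j k t := by
  have hA : (∑ i ∈ Finset.range (m + 1), -(2 * (i : ℝ)) * t ^ (i + 1) * h2 i y j k)
      = t * ∑ i ∈ Finset.range (m + 1), -(2 * (i : ℝ)) * t ^ i * h2 i y j k := by
    rw [Finset.mul_sum]
    exact Finset.sum_congr rfl fun i _ => by rw [pow_succ']; ring
  have hB : (∑ i ∈ Finset.range (m + 1), -(2 * (i : ℝ)) * t ^ (i + 1) * f2 i y)
      = t * ∑ i ∈ Finset.range (m + 1), -(2 * (i : ℝ)) * t ^ i * f2 i y := by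
    rw [Finset.mul_sum]
    exact Finset.sum_congr rfl fun i _ => by rw [pow_succ']; ring
  have hC : Kmat h h2 m t y j k
      = h y j k + t * ∑ i ∈ Finset.range (m + 1), t ^ i * h2 i y j k := by
    rw [Kmat_apply, Finset.mul_sum]
    congr 1
    exact Finset.sum_congr rfl fun i _ => by rw [pow_succ']; ring
  unfold P1t Q1t Wt
  rw [hA, hB, hC]
  ring

theorem solitonE_t_form (hs : ∀ j k, ContDiff ℝ (⊤ : ℕ∞) fun z => h z j k)
    (hs2 : ∀ i j k, ContDiff ℝ (⊤ : ℕ∞) fun z => h2 i z j k) (hfs : ∀ i, ContDiff ℝ (⊤ : ℕ∞) (f2 i))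
    {r : ℝ} {y : Pt n} (hr : r ≠ 0)
    (hdK : (Kmat h h2 m ((r ^ 2)⁻¹) y).det ≠ 0) (j k : Fin n) :
    solitonE h h2 f2 m j.succ k.succ (consPt r y)
      = ricci (Kmat h h2 m ((r ^ 2)⁻¹)) j k y
        + ((∑ i ∈ Finset.range (m + 1), ((r ^ 2)⁻¹) ^ i * pd j (pd k (f2 i)) y)
            - ∑ c, christoffel (Kmat h h2 m ((r ^ 2)⁻¹)) c j k y
                * (∑ i ∈ Finset.range (m + 1), ((r ^ 2)⁻¹) ^ i * pd c (f2 i) y))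
        - (1/2) * P2t h h2 m y j k ((r ^ 2)⁻¹)
        - (1/4) * (∑ i, ∑ q, (Kmat h h2 m ((r ^ 2)⁻¹) y)⁻¹ i q
            * P1t h h2 m y i q ((r ^ 2)⁻¹)) * P1t h h2 m y j k ((r ^ 2)⁻¹)
        + (1/4) * (∑ p, ∑ q, (Kmat h h2 m ((r ^ 2)⁻¹) y)⁻¹ p q
            * P1t h h2 m y j p ((r ^ 2)⁻¹) * P1t h h2 m y k q ((r ^ 2)⁻¹))
        + (1/4) * (∑ p, ∑ q, (Kmat h h2 m ((r ^ 2)⁻¹) y)⁻¹ p q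
            * P1t h h2 m y j q ((r ^ 2)⁻¹) * P1t h h2 m y p k ((r ^ 2)⁻¹))
        + (1/2) * Wt h h2 f2 m y j k ((r ^ 2)⁻¹) := by
  have hx0 : (consPt r y) 0 ≠ 0 := by rw [consPt_zero_apply]; exact hr
  have hr2 : (r : ℝ) ^ 2 ≠ 0 := pow_ne_zero 2 hr
  have htr2 : ((r : ℝ) ^ 2)⁻¹ * r ^ 2 = 1 := inv_mul_cancel₀ hr2
  have hdetH : (Htrunc h h2 m (consPt r y)).det ≠ 0 := by
    rw [det_Htrunc_consPt hr y]
    exact mul_ne_zero (pow_ne_zero _ hr2) hdK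
  -- the neighborhood hypothesis
  have hev : ∀ᶠ x' in nhds (consPt r y), x' 0 ≠ 0 ∧ IsUnit ((Htrunc h h2 m x').det) := by
    have ev1 : ∀ᶠ x' in nhds (consPt r y), x' 0 ≠ 0 := by
      have hopen : IsOpen {x' : Pt (n+1) | x' 0 ≠ 0} :=
        isOpen_ne.preimage (coordCLM (0 : Fin (n+1))).continuous
      exact Filter.eventually_of_mem (hopen.mem_nhds hx0) fun x' hx' => hx'
    have ev2 : ∀ᶠ x' in nhds (consPt r y), (Htrunc h h2 m x').det ≠ 0 := by
      have hco : ContinuousAt (fun x' => (Htrunc h h2 m x').det) (consPt r y) :=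
        (contDiffAt_det fun i j => contDiffAt_Htrunc hs hs2 hx0 i j).continuousAt
      have := hco.preimage_mem_nhds (isOpen_ne.mem_nhds hdetH)
      exact Filter.eventually_of_mem this fun x' hx' => hx'
    filter_upwards [ev1, ev2] with x' h1 h2'
    exact ⟨h1, isUnit_iff_ne_zero.2 h2'⟩
  rw [solitonE_tangential hs hs2 hfs hev j k]
  -- rewrite each piece in t-form
  rw [ricciT_consPt hs hs2 hr hdK j k]
  rw [hessT_consPt hs hs2 hfs hr j k]
  rw [pd0_H1fun_consPt hs hs2 hr y j k]
  rw [pd0_ftrunc_consPt hfs hr y]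
  rw [Htrunc_entry_consPt hr y j k]
  have hchr : (∑ c, christoffelT (Htrunc h h2 m) c j k (consPt r y)
      * (∑ i ∈ Finset.range (m + 1), ((r ^ 2)⁻¹) ^ i * pd c (f2 i) y))
      = ∑ c, christoffel (Kmat h h2 m ((r ^ 2)⁻¹)) c j k y
          * (∑ i ∈ Finset.range (m + 1), ((r ^ 2)⁻¹) ^ i * pd c (f2 i) y) :=
    Finset.sum_congr rfl fun c _ => by rw [christoffelT_consPt hs hs2 hr y c j k]
  rw [hchr]
  -- double sums
  have hsum1 : (∑ i, ∑ q, (Htrunc h h2 m (consPt r y))⁻¹ i q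
        * H1fun h h2 m i q (consPt r y))
      = ((r ^ 2)⁻¹ * r) * ∑ i, ∑ q, (Kmat h h2 m ((r ^ 2)⁻¹) y)⁻¹ i q
          * P1t h h2 m y i q ((r ^ 2)⁻¹) := by
    rw [Finset.mul_sum]
    refine Finset.sum_congr rfl fun i _ => ?_
    rw [Finset.mul_sum]
    refine Finset.sum_congr rfl fun q _ => ?_
    rw [Hinv_consPt hr y i q, H1fun_consPt hr y i q]
    unfold P1t
    ring
  have hsum2 : (∑ p, ∑ q, (Htrunc h h2 m (consPt r y))⁻¹ p q
        * H1fun h h2 m j p (consPt r y) * H1fun h h2 m k q (consPt r y))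
      = ∑ p, ∑ q, (Kmat h h2 m ((r ^ 2)⁻¹) y)⁻¹ p q
          * P1t h h2 m y j p ((r ^ 2)⁻¹) * P1t h h2 m y k q ((r ^ 2)⁻¹) := by
    refine Finset.sum_congr rfl fun p _ => Finset.sum_congr rfl fun q _ => ?_
    rw [Hinv_consPt hr y p q, H1fun_consPt hr y j p, H1fun_consPt hr y k q]
    unfold P1t
    field_simp
  have hsum3 : (∑ p, ∑ q, (Htrunc h h2 m (consPt r y))⁻¹ p q
        * H1fun h h2 m j q (consPt r y) * H1fun h h2 m p k (consPt r y))
      = ∑ p, ∑ q, (Kmat h h2 m ((r ^ 2)⁻¹) y)⁻¹ p q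
          * P1t h h2 m y j q ((r ^ 2)⁻¹) * P1t h h2 m y p k ((r ^ 2)⁻¹) := by
    refine Finset.sum_congr rfl fun p _ => Finset.sum_congr rfl fun q _ => ?_
    rw [Hinv_consPt hr y p q, H1fun_consPt hr y j q, H1fun_consPt hr y p k]
    unfold P1t
    field_simp
  rw [hsum1, hsum2, hsum3]
  rw [H1fun_consPt hr y j k]
  -- final scalar algebra
  have hWt := P1_Q1_K (h := h) (h2 := h2) (f2 := f2) (m := m) y j k ((r ^ 2)⁻¹)
  have hP2 : (2 * h y j k + ∑ i ∈ Finset.range (m + 1),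
      (2 * (i : ℝ)) * (2 * (i : ℝ) + 1) * ((r ^ 2)⁻¹) ^ (i + 1) * h2 i y j k)
      = P2t h h2 m y j k ((r ^ 2)⁻¹) := rfl
  have hQ1 : (-(1/2) + ∑ i ∈ Finset.range (m + 1),
      -(2 * (i : ℝ)) * ((r ^ 2)⁻¹) ^ (i + 1) * f2 i y) = Q1t f2 m y ((r ^ 2)⁻¹) := rfl
  have hP1 : (2 * h y j k + ∑ i ∈ Finset.range (m + 1),
      -(2 * (i : ℝ)) * ((r ^ 2)⁻¹) ^ (i + 1) * h2 i y j k)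
      = P1t h h2 m y j k ((r ^ 2)⁻¹) := rfl
  rw [hP2, hQ1, hP1]
  -- now pure scalar manipulation; use htr2 to cancel the r-powers
  have hKey : (1/2) * (r * P1t h h2 m y j k ((r ^ 2)⁻¹)) * (r * Q1t f2 m y ((r ^ 2)⁻¹))
      + (1/2) * (r ^ 2 * Kmat h h2 m ((r ^ 2)⁻¹) y j k)
      = (1/2) * Wt h h2 f2 m y j k ((r ^ 2)⁻¹) := by
    have : (1/2) * (r * P1t h h2 m y j k ((r ^ 2)⁻¹)) * (r * Q1t f2 m y ((r ^ 2)⁻¹))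
        + (1/2) * (r ^ 2 * Kmat h h2 m ((r ^ 2)⁻¹) y j k)
        = (1/2) * (r ^ 2) * (P1t h h2 m y j k ((r ^ 2)⁻¹) * Q1t f2 m y ((r ^ 2)⁻¹)
            + Kmat h h2 m ((r ^ 2)⁻¹) y j k) := by ring
    rw [this, hWt]
    field_simp
  have hB4 : (1/4) * (((r ^ 2)⁻¹ * r) * ∑ i, ∑ q, (Kmat h h2 m ((r ^ 2)⁻¹) y)⁻¹ i q
        * P1t h h2 m y i q ((r ^ 2)⁻¹)) * (r * P1t h h2 m y j k ((r ^ 2)⁻¹))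
      = (1/4) * (∑ i, ∑ q, (Kmat h h2 m ((r ^ 2)⁻¹) y)⁻¹ i q
          * P1t h h2 m y i q ((r ^ 2)⁻¹)) * P1t h h2 m y j k ((r ^ 2)⁻¹) := by
    field_simp
  rw [← hKey, ← hB4]
  ring
/-- in the formal expansion of an asymptotically conical gradient expanding
soliton (the tangential equation holding order by order, with `f₀` constant), the first
correction term is `h₀ = −2[Ric(h) − (n−1)h]`, i.e.
`H_{jk} = r²h_{jk} − 2[R_{jk} − (n−1)h_{jk}] + O(r⁻²)`. -/
theorem first_correction_term {n : ℕ} (h : Pt n → Matrix (Fin n) (Fin n) ℝ)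
    (hmet : IsMetric h)
    (h2 : ℕ → Pt n → Matrix (Fin n) (Fin n) ℝ) (f2 : ℕ → Pt n → ℝ)
    (hh2smooth : ∀ i j k, ContDiff ℝ (⊤ : ℕ∞) fun x => h2 i x j k)
    (hh2symm : ∀ i x, (h2 i x).IsSymm)
    (hf2smooth : ∀ i, ContDiff ℝ (⊤ : ℕ∞) (f2 i))
    (hf0 : ∃ c : ℝ, f2 0 = fun _ => c)
    (htang : ∀ (k : ℕ) (j j' : Fin n) (y : Pt n), ∃ m₀ : ℕ, ∀ m ≥ m₀,
      (fun r : ℝ => solitonE h h2 f2 m j.succ j'.succ (consPt r y)) =O[atTop]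
        fun r : ℝ => r ^ (-(k : ℤ))) :
    ∀ (x : Pt n) (j k : Fin n),
      h2 0 x j k = -2 * (ricci h j k x - ((n : ℝ) - 1) * h x j k) := by
  intro y j k
  have hs : ∀ j k, ContDiff ℝ (⊤ : ℕ∞) fun z => h z j k := hmet.smooth
  have hs2 := hh2smooth
  have hfs := hf2smooth
  obtain ⟨c₀, hc₀⟩ := hf0
  have hdet_hy : (h y).det ≠ 0 := (hmet.posdef y).det_pos.ne'
  have hdet_unit : IsUnit (h y).det := isUnit_iff_ne_zero.2 hdet_hy
  obtain ⟨m₀, hm⟩ := htang 1 j k y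
  have hO := hm m₀ le_rfl
  -- the soliton component tends to 0
  have hzero : Filter.Tendsto (fun r : ℝ => solitonE h h2 f2 m₀ j.succ k.succ (consPt r y))
      atTop (nhds 0) :=
    hO.trans_tendsto (tendsto_zpow_atTop_zero (by norm_num))
  -- t = (r²)⁻¹ tends to 0
  have hτ : Filter.Tendsto (fun r : ℝ => ((r ^ 2)⁻¹ : ℝ)) atTop (nhds 0) :=
    (tendsto_pow_atTop (two_ne_zero)).inv_tendsto_atTop
  -- determinant of Kmat stays nonzero
  have hKdet : Filter.Tendsto (fun t : ℝ => (Kmat h h2 m₀ t y).det) (nhds 0)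
      (nhds ((h y).det)) := by
    have hent : ∀ i j, ContDiffAt ℝ (⊤ : ℕ∞) (fun t : ℝ => Kmat h h2 m₀ t y i j) 0 := by
      intro i j
      have he : (fun t : ℝ => Kmat h h2 m₀ t y i j)
          = fun t => h y i j + ∑ i' ∈ Finset.range (m₀ + 1), t ^ (i' + 1) * h2 i' y i j := rfl
      rw [he]
      exact contDiffAt_const.add (ContDiffAt.sum fun i' _ =>
        (contDiffAt_id.pow (i' + 1)).mul contDiffAt_const)
    have := (contDiffAt_det hent).continuousAt.tendsto
    rwa [show (Kmat h h2 m₀ (0:ℝ) y).det = (h y).det from by rw [Kmat_zero_fun]] at this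
  have hKne : ∀ᶠ t in nhds (0:ℝ), (Kmat h h2 m₀ t y).det ≠ 0 :=
    hKdet.eventually (Filter.eventually_of_mem (isOpen_compl_singleton.mem_nhds hdet_hy)
      fun d hd => hd)
  have hev_ne : ∀ᶠ r in atTop, (Kmat h h2 m₀ ((r ^ 2)⁻¹) y).det ≠ 0 := hτ.eventually hKne
  have hev_r : ∀ᶠ r : ℝ in atTop, r ≠ 0 := eventually_ne_atTop 0
  -- polynomial limits
  have hmono : ∀ (c a : ℕ → ℝ), Filter.Tendsto
      (fun t : ℝ => ∑ i ∈ Finset.range (m₀ + 1), c i * t ^ (i + 1) * a i) (nhds 0)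
        (nhds 0) := by
    intro c a
    have hcont : Continuous (fun t : ℝ => ∑ i ∈ Finset.range (m₀ + 1), c i * t ^ (i+1) * a i) :=
      continuous_finset_sum _ fun i _ => (continuous_const.mul (continuous_pow (i+1))).mul continuous_const
    have hval := hcont.tendsto 0
    simp only [pow_succ, mul_zero, zero_mul, Finset.sum_const_zero] at hval
    exact hval
  have hpoly2 : ∀ (c a : ℕ → ℝ), Filter.Tendsto
      (fun t : ℝ => ∑ i ∈ Finset.range (m₀ + 1), c i * t ^ i * a i) (nhds 0)
        (nhds (c 0 * a 0)) := by
    intro c a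
    have hcont : Continuous (fun t : ℝ => ∑ i ∈ Finset.range (m₀ + 1), c i * t ^ i * a i) :=
      continuous_finset_sum _ fun i _ => (continuous_const.mul (continuous_pow i)).mul continuous_const
    have h0 : (∑ i ∈ Finset.range (m₀ + 1), c i * (0:ℝ) ^ i * a i) = c 0 * a 0 := by
      rw [Finset.sum_eq_single 0]
      · simp
      · intro b _ hb; simp [zero_pow hb]
      · intro hnot; exact absurd (Finset.mem_range.2 (Nat.succ_pos m₀)) hnot
    have := hcont.tendsto 0
    rwa [h0] at this
  have hpoly : ∀ (a : ℕ → ℝ), Filter.Tendsto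
      (fun t : ℝ => ∑ i ∈ Finset.range (m₀ + 1), t ^ i * a i) (nhds 0) (nhds (a 0)) := by
    intro a
    have hval := hpoly2 (fun _ => (1:ℝ)) a
    simp only [one_mul] at hval
    exact hval
  have hP1 : ∀ (a b : Fin n), Filter.Tendsto (P1t h h2 m₀ y a b) (nhds 0)
      (nhds (2 * h y a b)) := by
    intro a b
    unfold P1t
    have htot := (tendsto_const_nhds (x := 2 * h y a b)).add
      (hmono (fun i => -(2 * (i:ℝ))) (fun i => h2 i y a b))
    rw [add_zero] at htot
    exact htot
  have hP2 : Filter.Tendsto (P2t h h2 m₀ y j k) (nhds 0) (nhds (2 * h y j k)) := by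
    unfold P2t
    have htot := (tendsto_const_nhds (x := 2 * h y j k)).add
      (hmono (fun i => (2 * (i:ℝ)) * (2 * (i:ℝ) + 1)) (fun i => h2 i y j k))
    rw [add_zero] at htot
    exact htot
  have hW : Filter.Tendsto (Wt h h2 f2 m₀ y j k) (nhds 0) (nhds (h2 0 y j k)) := by
    unfold Wt
    have hA : Filter.Tendsto
        (fun t : ℝ => ∑ i ∈ Finset.range (m₀ + 1), -(2 * (i:ℝ)) * t ^ i * h2 i y j k)
        (nhds 0) (nhds 0) := by
      have hA' := hpoly2 (fun i => -(2 * (i:ℝ))) (fun i => h2 i y j k)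
      simp only [Nat.cast_zero, mul_zero, neg_zero, zero_mul] at hA'
      exact hA'
    have hB : Filter.Tendsto
        (fun t : ℝ => ∑ i ∈ Finset.range (m₀ + 1), -(2 * (i:ℝ)) * t ^ i * f2 i y)
        (nhds 0) (nhds 0) := by
      have hB' := hpoly2 (fun i => -(2 * (i:ℝ))) (fun i => f2 i y)
      simp only [Nat.cast_zero, mul_zero, neg_zero, zero_mul] at hB'
      exact hB'
    have hC : Filter.Tendsto
        (fun t : ℝ => ∑ i ∈ Finset.range (m₀ + 1), t ^ i * h2 i y j k)
        (nhds 0) (nhds (h2 0 y j k)) := hpoly (fun i => h2 i y j k)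
    have htot := (((hB.const_mul (2 * h y j k)).sub (hA.div_const 2)).add
      ((tendsto_id.mul (hA.mul hB)))).add hC
    simp only [mul_zero, zero_div, zero_mul, sub_zero, add_zero, zero_add] at htot
    exact htot
  -- double-sum limits
  have hS1 : Filter.Tendsto
      (fun t : ℝ => ∑ i, ∑ q, (Kmat h h2 m₀ t y)⁻¹ i q * P1t h h2 m₀ y i q t) (nhds 0)
      (nhds (∑ i, ∑ q, (h y)⁻¹ i q * (2 * h y i q))) :=
    tendsto_finset_sum _ fun i _ => tendsto_finset_sum _ fun q _ =>
      (tendsto_Kinv hs hs2 hdet_hy i q).mul (hP1 i q)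
  have hS2 : Filter.Tendsto
      (fun t : ℝ => ∑ p, ∑ q, (Kmat h h2 m₀ t y)⁻¹ p q * P1t h h2 m₀ y j p t
        * P1t h h2 m₀ y k q t) (nhds 0)
      (nhds (∑ p, ∑ q, (h y)⁻¹ p q * (2 * h y j p) * (2 * h y k q))) :=
    tendsto_finset_sum _ fun p _ => tendsto_finset_sum _ fun q _ =>
      (((tendsto_Kinv hs hs2 hdet_hy p q).mul (hP1 j p)).mul (hP1 k q))
  have hS3 : Filter.Tendsto
      (fun t : ℝ => ∑ p, ∑ q, (Kmat h h2 m₀ t y)⁻¹ p q * P1t h h2 m₀ y j q t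
        * P1t h h2 m₀ y p k t) (nhds 0)
      (nhds (∑ p, ∑ q, (h y)⁻¹ p q * (2 * h y j q) * (2 * h y p k))) :=
    tendsto_finset_sum _ fun p _ => tendsto_finset_sum _ fun q _ =>
      (((tendsto_Kinv hs hs2 hdet_hy p q).mul (hP1 j q)).mul (hP1 p k))
  have hHess : Filter.Tendsto
      (fun t : ℝ => (∑ i ∈ Finset.range (m₀ + 1), t ^ i * pd j (pd k (f2 i)) y)
        - ∑ c, christoffel (Kmat h h2 m₀ t) c j k y
            * (∑ i ∈ Finset.range (m₀ + 1), t ^ i * pd c (f2 i) y)) (nhds 0)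
      (nhds ((pd j (pd k (f2 0)) y)
        - ∑ c, christoffel h c j k y * pd c (f2 0) y)) := by
    have hmain := (hpoly (fun i => pd j (pd k (f2 i)) y)).sub
      (tendsto_finset_sum (Finset.univ : Finset (Fin n)) fun c _ =>
        (tendsto_christoffel_Kmat (m := m₀) hs hs2 hdet_hy c j k).mul
          (hpoly (fun i => pd c (f2 i) y)))
    exact hmain
  -- the big composite limit
  have hBig : Filter.Tendsto (fun t : ℝ =>
      ricci (Kmat h h2 m₀ t) j k y
        + ((∑ i ∈ Finset.range (m₀ + 1), t ^ i * pd j (pd k (f2 i)) y)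
            - ∑ c, christoffel (Kmat h h2 m₀ t) c j k y
                * (∑ i ∈ Finset.range (m₀ + 1), t ^ i * pd c (f2 i) y))
        - (1/2) * P2t h h2 m₀ y j k t
        - (1/4) * (∑ i, ∑ q, (Kmat h h2 m₀ t y)⁻¹ i q * P1t h h2 m₀ y i q t)
            * P1t h h2 m₀ y j k t
        + (1/4) * (∑ p, ∑ q, (Kmat h h2 m₀ t y)⁻¹ p q * P1t h h2 m₀ y j p t
            * P1t h h2 m₀ y k q t)
        + (1/4) * (∑ p, ∑ q, (Kmat h h2 m₀ t y)⁻¹ p q * P1t h h2 m₀ y j q t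
            * P1t h h2 m₀ y p k t)
        + (1/2) * Wt h h2 f2 m₀ y j k t) (nhds 0)
      (nhds (ricci h j k y
        + ((pd j (pd k (f2 0)) y) - ∑ c, christoffel h c j k y * pd c (f2 0) y)
        - (1/2) * (2 * h y j k)
        - (1/4) * (∑ i, ∑ q, (h y)⁻¹ i q * (2 * h y i q)) * (2 * h y j k)
        + (1/4) * (∑ p, ∑ q, (h y)⁻¹ p q * (2 * h y j p) * (2 * h y k q))
        + (1/4) * (∑ p, ∑ q, (h y)⁻¹ p q * (2 * h y j q) * (2 * h y p k))
        + (1/2) * h2 0 y j k)) := by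
    refine Filter.Tendsto.add ?_ (hW.const_mul (1/2))
    refine Filter.Tendsto.add ?_ (hS3.const_mul (1/4))
    refine Filter.Tendsto.add ?_ (hS2.const_mul (1/4))
    refine Filter.Tendsto.sub ?_ ((hS1.const_mul (1/4)).mul (hP1 j k))
    refine Filter.Tendsto.sub ?_ (hP2.const_mul (1/2))
    exact (tendsto_ricci_Kmat hs hs2 hdet_hy j k).add hHess
  have hcomp := hBig.comp hτ
  -- identify with the soliton component eventually
  have hSeq : (fun r : ℝ => solitonE h h2 f2 m₀ j.succ k.succ (consPt r y)) =ᶠ[atTop]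
      (fun t : ℝ =>
      ricci (Kmat h h2 m₀ t) j k y
        + ((∑ i ∈ Finset.range (m₀ + 1), t ^ i * pd j (pd k (f2 i)) y)
            - ∑ c, christoffel (Kmat h h2 m₀ t) c j k y
                * (∑ i ∈ Finset.range (m₀ + 1), t ^ i * pd c (f2 i) y))
        - (1/2) * P2t h h2 m₀ y j k t
        - (1/4) * (∑ i, ∑ q, (Kmat h h2 m₀ t y)⁻¹ i q * P1t h h2 m₀ y i q t)
            * P1t h h2 m₀ y j k t
        + (1/4) * (∑ p, ∑ q, (Kmat h h2 m₀ t y)⁻¹ p q * P1t h h2 m₀ y j p t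
            * P1t h h2 m₀ y k q t)
        + (1/4) * (∑ p, ∑ q, (Kmat h h2 m₀ t y)⁻¹ p q * P1t h h2 m₀ y j q t
            * P1t h h2 m₀ y p k t)
        + (1/2) * Wt h h2 f2 m₀ y j k t) ∘ (fun r : ℝ => ((r ^ 2)⁻¹ : ℝ)) := by
    filter_upwards [hev_r, hev_ne] with r h1 h2'
    exact solitonE_t_form hs hs2 hfs h1 h2' j k
  have hT := hcomp.congr' hSeq.symm
  have hL0 := tendsto_nhds_unique hT hzero
  -- simplify the limit value
  have hfun0 : pd k (f2 0) = fun _ : Pt n => (0:ℝ) :=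
    funext fun z => by rw [hc₀]; exact pd_const c₀ k z
  have e1 : pd j (pd k (f2 0)) y = 0 := by rw [hfun0]; exact pd_const 0 j y
  have e2 : ∀ c : Fin n, pd c (f2 0) y = 0 := fun c => by rw [hc₀]; exact pd_const c₀ c y
  have e6 : (∑ c, christoffel h c j k y * pd c (f2 0) y) = 0 :=
    Finset.sum_eq_zero fun c _ => by rw [e2 c]; ring
  have e3 : (∑ i, ∑ q, (h y)⁻¹ i q * (2 * h y i q)) = 2 * (n : ℝ) := by
    have : (∑ i, ∑ q, (h y)⁻¹ i q * (2 * h y i q))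
        = 2 * ∑ i, ∑ q, (h y)⁻¹ i q * h y i q := by
      rw [Finset.mul_sum]
      refine Finset.sum_congr rfl fun i _ => ?_
      rw [Finset.mul_sum]
      exact Finset.sum_congr rfl fun q _ => by ring
    rw [this, sum_inv_mul_self (hmet.symm y) hdet_unit]
  have e4 : (∑ p, ∑ q, (h y)⁻¹ p q * (2 * h y j p) * (2 * h y k q)) = 4 * h y j k := by
    have : (∑ p, ∑ q, (h y)⁻¹ p q * (2 * h y j p) * (2 * h y k q))
        = 4 * ∑ p, ∑ q, (h y)⁻¹ p q * h y j p * h y k q := by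
      rw [Finset.mul_sum]
      refine Finset.sum_congr rfl fun p _ => ?_
      rw [Finset.mul_sum]
      exact Finset.sum_congr rfl fun q _ => by ring
    rw [this, sum_sandwich1 (hmet.symm y) hdet_unit j k]
  have e5 : (∑ p, ∑ q, (h y)⁻¹ p q * (2 * h y j q) * (2 * h y p k)) = 4 * h y j k := by
    have : (∑ p, ∑ q, (h y)⁻¹ p q * (2 * h y j q) * (2 * h y p k))
        = 4 * ∑ p, ∑ q, (h y)⁻¹ p q * h y j q * h y p k := by
      rw [Finset.mul_sum]
      refine Finset.sum_congr rfl fun p _ => ?_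
      rw [Finset.mul_sum]
      exact Finset.sum_congr rfl fun q _ => by ring
    rw [this, sum_sandwich2 (hmet.symm y) hdet_unit j k]
  rw [e1, e6, e3, e4, e5] at hL0
  linear_combination (2 : ℝ) * hL0
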